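/- arXiv:2211.13072 — 8 statements merged into one kernel-verified Lean document; each statement's English description precedes it below -/
import Mathlib

section
/- If G is a graph on n vertices and the permanental polynomial of G is π(G,x) = Σ_{k=0}^n b_k x^{n-k}, then G is bipartite if and only if b_k = 0 for every odd k with 0 ≤ k ≤ n. -/
/-!
In the expansion of `per(xI − A)`, a permutation `σ` contributes `(−1)^|supp σ| x^(n − |supp σ|)`
if it sends every vertex it moves to a neighbour, and `0` otherwise. All contributions to `b_k`
therefore have the same sign, so `b_k = 0` iff no such `σ` moves exactly `k` vertices.
Such a `σ` swaps the two colours of a 2-colouring on its support, so `|supp σ|` is even when `G`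
is bipartite. Conversely, a non-bipartite graph has an odd closed walk; a shortest one visits no
vertex twice, and the cyclic permutation along it is such a `σ` with odd support.
-/

open Polynomial

/-- The permanental polynomial of a simple graph `G`:
`π(G, x) = per(x I − A(G))`, computed over `ℂ[X]`. -/
noncomputable def permPoly {V : Type*} [Fintype V] [DecidableEq V]
    (G : SimpleGraph V) : Polynomial ℂ :=
  letI := Classical.decRel G.Adj
  Matrix.permanent ((X : Polynomial ℂ) • (1 : Matrix V V (Polynomial ℂ))
      - (SimpleGraph.adjMatrix (Polynomial ℂ) G))

open Finset

namespace SimpleGraph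
variable {V : Type*} {G : SimpleGraph V}

def IsAdjPerm (G : SimpleGraph V) (σ : Equiv.Perm V) : Prop := ∀ i, σ i ≠ i → G.Adj i (σ i)

namespace Walk
variable {v : V}

theorem exists_loops_of_getVert_eq (w : G.Walk v v) {i j : ℕ} (hij : i ≤ j) (hj : j ≤ w.length)
    (h : w.getVert i = w.getVert j) :
    ∃ c₁ c₂ : G.Walk (w.getVert i) (w.getVert i),
      c₁.length = j - i ∧ c₂.length = w.length - (j - i) := by
  refine ⟨((w.drop i).take (j - i)).copy rfl (by simp [Nat.add_sub_cancel' hij, h]),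
    ((w.drop j).append (w.take i)).copy h.symm rfl, ?_, ?_⟩ <;> simp <;> omega

theorem exists_odd_loop_injOn_getVert (w : G.Walk v v) (hw : Odd w.length) :
    ∃ (u : V) (c : G.Walk u u), Odd c.length ∧ Set.InjOn c.getVert (Set.Iio c.length) := by
  induction h : w.length using Nat.strong_induction_on generalizing v with
  | _ n ih =>
  by_cases hinj : Set.InjOn w.getVert (Set.Iio w.length)
  · exact ⟨v, w, hw, hinj⟩
  obtain ⟨i, j, hij, hj, hvert⟩ : ∃ i j, i < j ∧ j < n ∧ w.getVert i = w.getVert j := by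
    simp only [Set.InjOn, Set.mem_Iio, not_forall] at hinj
    obtain ⟨a, ha, b, hb, hab, hne⟩ := hinj
    rcases lt_or_gt_of_ne hne with hlt | hlt
    exacts [⟨a, b, hlt, h ▸ hb, hab⟩, ⟨b, a, hlt, h ▸ ha, hab.symm⟩]
  obtain ⟨c₁, c₂, h₁, h₂⟩ := w.exists_loops_of_getVert_eq hij.le (by omega) hvert
  rw [h] at hw h₂
  rcases Nat.even_or_odd c₁.length with he | ho
  · refine ih c₂.length (by omega) c₂ ?_ rfl
    rw [Nat.odd_iff] at hw ⊢
    rw [Nat.even_iff] at he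
    omega
  · exact ih c₁.length (by omega) c₁ ho rfl

theorem exists_isAdjPerm_card_support_eq_length [Fintype V] [DecidableEq V] (w : G.Walk v v)
    (hw : Set.InjOn w.getVert (Set.Iio w.length)) :
    ∃ σ : Equiv.Perm V, G.IsAdjPerm σ ∧ #σ.support = w.length := by
  set l := (List.range w.length).map w.getVert
  have hnodup : l.Nodup := List.nodup_range.map_on fun a ha b hb hab =>
    hw (List.mem_range.mp ha) (List.mem_range.mp hb) hab
  have hlen : l.length = w.length := by simp [l]
  have hlen_ne_one : w.length ≠ 1 := fun h => by
    have hadj := w.adj_getVert_succ (i := 0) (by omega)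
    rw [zero_add, ← h, getVert_length, getVert_zero] at hadj
    exact G.irrefl hadj
  refine ⟨l.formPerm, ?_, ?_⟩
  · intro x hx
    obtain ⟨j, hj, rfl⟩ : ∃ j < w.length, w.getVert j = x := by
      simpa [l] using List.mem_of_formPerm_apply_ne hx
    have hnext : w.getVert ((j + 1) % w.length) = w.getVert (j + 1) := by
      rcases Nat.lt_or_ge (j + 1) w.length with hlt | hge
      · rw [Nat.mod_eq_of_lt hlt]
      · rw [show j + 1 = w.length by omega, Nat.mod_self, getVert_zero, getVert_length]
    have hσ : l.formPerm (w.getVert j) = w.getVert (j + 1) := by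
      have := List.formPerm_apply_getElem l hnodup j (by omega)
      simpa only [l, List.getElem_map, List.getElem_range, List.length_map, List.length_range,
        hnext] using this
    rw [hσ]
    exact w.adj_getVert_succ hj
  · rw [List.support_formPerm_of_nodup l hnodup, List.toFinset_card_of_nodup hnodup, hlen]
    intro x hx
    exact hlen_ne_one (by simpa [hx] using hlen.symm)

end Walk

variable [Fintype V] [DecidableEq V]

instance [DecidableRel G.Adj] : DecidablePred G.IsAdjPerm :=
  fun σ => inferInstanceAs (Decidable (∀ i, σ i ≠ i → G.Adj i (σ i)))

theorem prod_smul_one_sub_adjMatrix_apply {R : Type*} [CommRing R] [DecidableRel G.Adj]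
    (x : R) (σ : Equiv.Perm V) :
    ∏ i, (x • (1 : Matrix V V R) - G.adjMatrix R) (σ i) i =
      if G.IsAdjPerm σ then (-1) ^ #σ.support * x ^ (Fintype.card V - #σ.support) else 0 := by
  have hfixed : ∀ i ∈ σ.supportᶜ, (x • (1 : Matrix V V R) - G.adjMatrix R) (σ i) i = x := by
    intro i hi
    simp [Equiv.Perm.notMem_support.mp (mem_compl.mp hi)]
  have hmoved : ∀ i ∈ σ.support, (x • (1 : Matrix V V R) - G.adjMatrix R) (σ i) i =
      -if G.Adj i (σ i) then 1 else 0 := by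
    intro i hi
    simp [Matrix.one_apply_ne (Equiv.Perm.mem_support.mp hi), G.adj_comm (σ i)]
  have hadj : (∀ i ∈ σ.support, G.Adj i (σ i)) ↔ G.IsAdjPerm σ :=
    forall_congr' fun i => by rw [Equiv.Perm.mem_support]
  rw [← prod_mul_prod_compl σ.support, prod_congr rfl hfixed, prod_congr rfl hmoved, prod_neg,
    prod_boole, prod_const, card_compl]
  simp only [hadj]
  split_ifs <;> ring

theorem coeff_permanent_X_smul_one_sub_adjMatrix {R : Type*} [CommRing R] [DecidableRel G.Adj]
    {k : ℕ} (hk : k ≤ Fintype.card V) :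
    (Matrix.permanent ((X : R[X]) • (1 : Matrix V V R[X]) - G.adjMatrix R[X])).coeff
        (Fintype.card V - k) =
      (-1) ^ k * #{σ : Equiv.Perm V | G.IsAdjPerm σ ∧ #σ.support = k} := by
  have hterm : ∀ σ : Equiv.Perm V,
      (∏ i, ((X : R[X]) • (1 : Matrix V V R[X]) - G.adjMatrix R[X]) (σ i) i).coeff
          (Fintype.card V - k) = if G.IsAdjPerm σ ∧ #σ.support = k then (-1) ^ k else 0 := by
    intro σ
    have hσ : #σ.support ≤ Fintype.card V := card_le_univ _
    rw [prod_smul_one_sub_adjMatrix_apply, ← C_1, ← C_neg, ← C_pow]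
    split_ifs with h₁ h₂ h₂ <;> simp only [coeff_C_mul_X_pow, coeff_zero]
    · obtain ⟨-, rfl⟩ := h₂
      exact if_pos rfl
    · exact if_neg fun h => h₂ ⟨h₁, by omega⟩
    · exact absurd h₂.1 h₁
  rw [Matrix.permanent, finsetSum_coeff, sum_congr rfl fun σ _ => hterm σ, ← sum_filter,
    sum_const, nsmul_eq_mul, mul_comm]

theorem IsAdjPerm.even_card_support (hc : G.Colorable 2) {σ : Equiv.Perm V}
    (hσ : G.IsAdjPerm σ) : Even #σ.support := by
  obtain ⟨c⟩ := hc
  let f : V → ZMod 2 := fun v => (c v : ℕ)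
  have hflip : ∀ i ∈ σ.support, f (σ i) = f i + 1 := by
    have hne : ∀ a b : Fin 2, a ≠ b → ((b : ℕ) : ZMod 2) = (a : ℕ) + 1 := by decide
    exact fun i hi => hne _ _ (c.valid (hσ i (Equiv.Perm.mem_support.mp hi)))
  have hsum : ∑ i ∈ σ.support, f (σ i) = ∑ i ∈ σ.support, f i :=
    σ.sum_comp σ.support f fun i hi => Equiv.Perm.mem_support.mpr hi
  rw [sum_congr rfl hflip, sum_add_distrib, sum_const, add_eq_left, nsmul_one] at hsum
  exact (ZMod.natCast_eq_zero_iff_even).mp hsum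

end SimpleGraph

open SimpleGraph

theorem permPoly_coeff_card_sub_eq_zero_iff {V : Type*} [Fintype V] [DecidableEq V]
    (G : SimpleGraph V) {k : ℕ} (hk : k ≤ Fintype.card V) :
    (permPoly G).coeff (Fintype.card V - k) = 0 ↔
      ∀ σ : Equiv.Perm V, G.IsAdjPerm σ → #σ.support ≠ k := by
  classical
  rw [permPoly, coeff_permanent_X_smul_one_sub_adjMatrix hk, mul_eq_zero,
    or_iff_right (pow_ne_zero _ (neg_ne_zero.mpr one_ne_zero)), Nat.cast_eq_zero,
    card_eq_zero, filter_eq_empty_iff]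
  simp only [mem_univ, true_implies, not_and]

/-- A graph is bipartite iff all odd-indexed coefficients of its permanental
polynomial `π(G,x) = Σ_{k=0}^n b_k x^{n-k}` vanish. -/
theorem bipartite_iff_odd_permPoly_coeff_eq_zero
    {V : Type*} [Fintype V] [DecidableEq V] (G : SimpleGraph V) :
    G.Colorable 2 ↔
      ∀ k : ℕ, k ≤ Fintype.card V → Odd k →
        (permPoly G).coeff (Fintype.card V - k) = 0 := by
  constructor
  · intro hc k hk hodd
    rw [permPoly_coeff_card_sub_eq_zero_iff G hk]
    rintro σ hσ rfl
    exact Nat.not_even_iff_odd.mpr hodd (hσ.even_card_support hc)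
  · intro h
    rw [two_colorable_iff_forall_loop_even]
    intro v w
    by_contra hw
    obtain ⟨_, c, hodd, hinj⟩ := w.exists_odd_loop_injOn_getVert (Nat.not_even_iff_odd.mp hw)
    obtain ⟨σ, hσ, hcard⟩ := c.exists_isAdjPerm_card_support_eq_length hinj
    have hk : c.length ≤ Fintype.card V := hcard ▸ card_le_univ _
    exact (permPoly_coeff_card_sub_eq_zero_iff G hk).mp (h _ hk hodd) σ hσ hcard
end

section
/- If every root of the permanental polynomial of a graph G is purely imaginary (i.e., has zero real part), then G is bipartite. -/
/-!
The adjacency matrix `A` is real, so the roots of `π(G, x)` are closed under conjugation; when they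
are purely imaginary, conjugation is negation, hence `π(G, -x) = (-1)ⁿ π(G, x)`. At `x = 1` this
says `per(I + A) = per(I - A)`. But `|∏ᵢ (I - A)_{σ i, i}| = ∏ᵢ (I + A)_{σ i, i}` for every
permutation `σ`, so `per(I - A) ≤ per(I + A)`, strictly as soon as some `σ` sending every vertex it
moves to a neighbour moves an odd number of vertices: the rotation along an odd cycle does, and a
non-bipartite graph has an odd cycle.
-/

open Polynomial

open Finset

theorem RingHom.map_permanent {n R S : Type*} [Fintype n] [DecidableEq n] [CommSemiring R]
    [CommSemiring S] (f : R →+* S) (M : Matrix n n R) :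
    f M.permanent = (M.map f).permanent := by
  simp [Matrix.permanent, map_sum, map_prod]

namespace Polynomial

theorem degree_finsetProd_X_sub_C_eq_card {α R : Type*} [CommRing R] [Nontrivial R]
    (s : Finset α) (f : α → R) : (∏ a ∈ s, (X - C (f a))).degree = (#s : WithBot ℕ) := by
  rw [degree_eq_natDegree (monic_prod_of_monic _ _ fun a _ => monic_X_sub_C (f a)).ne_zero,
    natDegree_finsetProd_X_sub_C_eq_card]

theorem eval_neg_of_roots_map_neg {K : Type*} [Field K] {p : K[X]}
    (hcard : p.roots.card = p.natDegree) (hneg : p.roots.map Neg.neg = p.roots) (x : K) :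
    p.eval (-x) = (-1) ^ p.natDegree * p.eval x := by
  have heval (y : K) : p.eval y = p.leadingCoeff * (p.roots.map (y - ·)).prod := by
    conv_lhs => rw [← C_leadingCoeff_mul_prod_multiset_X_sub_C hcard]
    simp [eval_multiset_prod, Multiset.map_map]
  have hflip : p.roots.map (-x - ·) = (p.roots.map (x - ·)).map Neg.neg := by
    conv_lhs => rw [← hneg]
    simp only [Multiset.map_map, Function.comp_def, sub_neg_eq_add, neg_sub']
  rw [heval, heval, hflip, Multiset.prod_map_neg, Multiset.card_map, hcard]
  ring

theorem roots_map_neg_of_re_eq_zero {p : ℂ[X]} (hp : p.map (starRingEnd ℂ) = p)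
    (h : ∀ z ∈ p.roots, z.re = 0) : p.roots.map Neg.neg = p.roots :=
  calc p.roots.map Neg.neg = p.roots.map (starRingEnd ℂ) :=
        Multiset.map_congr rfl fun z hz => Complex.ext (by simp [h z hz]) (by simp)
    _ = (p.map (starRingEnd ℂ)).roots :=
        roots_map_of_injective_of_card_eq_natDegree (starRingEnd ℂ).injective
          IsAlgClosed.card_roots_eq_natDegree
    _ = p.roots := by rw [hp]

end Polynomial

namespace Matrix

variable {n R S : Type*} [Fintype n] [DecidableEq n] [CommRing R] [CommRing S]

noncomputable def permanentalPoly (M : Matrix n n R) : R[X] :=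
  (charmatrix M).permanent

theorem permanentalPoly_sub_diagonal_degree_lt (M : Matrix n n R) :
    (M.permanentalPoly - ∏ i, (X - C (M i i))).degree < Fintype.card n := by
  rw [permanentalPoly, permanent, ← add_sum_erase _ _ (mem_univ 1)]
  simp only [Equiv.Perm.coe_one, id, charmatrix_apply_eq, add_sub_cancel_left]
  refine (degree_sum_le _ _).trans_lt
    ((Finset.sup_lt_iff (WithBot.bot_lt_coe _)).mpr fun σ hσ => ?_)
  refine degree_le_natDegree.trans_lt (WithBot.coe_lt_coe.mpr ?_)
  calc (∏ i, charmatrix M (σ i) i).natDegree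
      ≤ ∑ i, (charmatrix M (σ i) i).natDegree := natDegree_prod_le _ _
    _ ≤ ∑ i, if σ i = i then 1 else 0 := sum_le_sum fun i _ => charmatrix_apply_natDegree_le _ _
    _ = #{i | σ i = i} := by rw [sum_boole, Nat.cast_id]
    _ < Fintype.card n :=
      (Equiv.Perm.fixed_point_card_lt_of_ne_one (ne_of_mem_erase hσ)).trans_le (Nat.sub_le _ _)

theorem degree_permanentalPoly [Nontrivial R] (M : Matrix n n R) :
    M.permanentalPoly.degree = (Fintype.card n : WithBot ℕ) := by
  rw [← sub_add_cancel M.permanentalPoly (∏ i, (X - C (M i i))),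
    degree_add_eq_right_of_degree_lt] <;>
  rw [degree_finsetProd_X_sub_C_eq_card, card_univ]
  exact M.permanentalPoly_sub_diagonal_degree_lt

theorem natDegree_permanentalPoly [Nontrivial R] (M : Matrix n n R) :
    M.permanentalPoly.natDegree = Fintype.card n :=
  natDegree_eq_of_degree_eq_some M.degree_permanentalPoly

theorem eval_permanentalPoly (M : Matrix n n R) (r : R) :
    M.permanentalPoly.eval r = (scalar n r - M).permanent := by
  rw [permanentalPoly, ← coe_evalRingHom, RingHom.map_permanent]
  congr
  ext i j
  obtain rfl | hij := eq_or_ne i j <;> simp [*]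

theorem permanentalPoly_map (M : Matrix n n R) (f : R →+* S) :
    (M.map f).permanentalPoly = M.permanentalPoly.map f := by
  rw [permanentalPoly, charmatrix_map, permanentalPoly, ← coe_mapRingHom, RingHom.map_permanent]

end Matrix

theorem List.rel_formPerm_of_isChain {α : Type*} [DecidableEq α] {R : α → α → Prop}
    {l : List α} (hl : l.Nodup) (hne : l ≠ []) (hR : (l ++ [l.head hne]).IsChain R)
    {x : α} (hx : x ∈ l) : R x (l.formPerm x) := by
  obtain ⟨i, hi, rfl⟩ := List.mem_iff_getElem.mp hx
  have hstep := List.isChain_iff_getElem.mp hR i (by simpa using hi)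
  rw [List.formPerm_apply_getElem l hl i hi]
  rcases (Nat.succ_le_of_lt hi).lt_or_eq with hlt | heq
  · simpa [Nat.mod_eq_of_lt hlt, List.getElem_append_left hi, List.getElem_append_left hlt]
      using hstep
  · simpa [← heq, List.head_eq_getElem] using hstep

namespace SimpleGraph.Walk

variable {V : Type*} {G : SimpleGraph V}

theorem isPath_or_exists_shortcut : ∀ {v w : V} (q : G.Walk v w), q.IsPath ∨
    ∃ (x : V) (c : G.Walk x x) (q' : G.Walk v w), 0 < c.length ∧ q'.length + c.length = q.length
  | _, _, nil => Or.inl IsPath.nil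
  | v, _, cons hadj q => by
    classical
    rcases isPath_or_exists_shortcut q with hq | ⟨x, c, q', hc, hlen⟩
    · by_cases hv : v ∈ q.support
      · have hsplit := congrArg length (q.take_spec hv)
        rw [length_append] at hsplit
        exact Or.inr ⟨v, cons hadj (q.takeUntil v hv), q.dropUntil v hv, by simp,
          by simp only [length_cons]; omega⟩
      · exact Or.inl (hq.cons hv)
    · exact Or.inr ⟨x, c, cons hadj q', hc, by simp only [length_cons]; omega⟩

theorem exists_isCycle_odd_length {u : V} (p : G.Walk u u) (hp : Odd p.length) :
    ∃ (v : V) (c : G.Walk v v), c.IsCycle ∧ Odd c.length := by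
  induction hn : p.length using Nat.strong_induction_on generalizing u with
  | _ n ih =>
  cases p with
  | nil => simp at hp
  | cons hadj q =>
    rcases q.isPath_or_exists_shortcut with hq | ⟨x, c, q', hc, hlen⟩
    · have hq0 : q.length ≠ 0 := fun h0 => G.loopless.irrefl _ (eq_of_length_eq_zero h0 ▸ hadj)
      refine ⟨u, cons hadj q, isCycle_iff_isPath_tail_and_le_length.mpr ⟨by simpa, ?_⟩, hp⟩
      rw [length_cons] at hp ⊢
      rcases hp with ⟨k, hk⟩
      omega
    · rw [length_cons] at hn
      rcases Nat.even_or_odd c.length with hce | hco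
      · have hsum : Odd ((cons hadj q').length + c.length) := by
          rwa [length_cons, add_right_comm, hlen, ← length_cons]
        exact ih _ (by rw [length_cons]; omega) _ (Nat.odd_add.mp hsum |>.mpr hce) rfl
      · exact ih _ (by omega) c hco rfl

end SimpleGraph.Walk

namespace SimpleGraph

section

variable {V : Type*} [Fintype V] [DecidableEq V] {G : SimpleGraph V}

theorem Walk.IsCycle.exists_perm_card_support_eq_length {v : V} {c : G.Walk v v}
    (hc : c.IsCycle) :
    ∃ σ : Equiv.Perm V, #σ.support = c.length ∧ ∀ x, σ x ≠ x → G.Adj (σ x) x := by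
  set l := c.support.dropLast
  have hlen : l.length = c.length := by simp [l]
  have hne : l ≠ [] := List.ne_nil_of_length_pos (by have := hc.three_le_length; omega)
  have hsupp : c.support = l ++ [l.head hne] := by
    have hhead : l.head hne = v := by
      rw [List.head_dropLast]; exact c.head_support
    conv_lhs => rw [← List.dropLast_concat_getLast c.support_ne_nil]
    rw [c.getLast_support, hhead]
  refine ⟨l.formPerm, ?_, fun x hx => ?_⟩
  · have hnot_single : ∀ x, l ≠ [x] := fun x hx => by
      have := hc.three_le_length; rw [← hlen, hx] at this; simp at this
    rw [List.support_formPerm_of_nodup l hc.nodup_dropLast_support hnot_single,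
      List.toFinset_card_of_nodup hc.nodup_dropLast_support, hlen]
  · exact (List.rel_formPerm_of_isChain hc.nodup_dropLast_support hne
      (hsupp ▸ c.isChain_adj_support) (List.mem_of_formPerm_apply_ne hx)).symm

theorem exists_perm_odd_card_support_of_not_colorable_two (hG : ¬ G.Colorable 2) :
    ∃ σ : Equiv.Perm V, Odd #σ.support ∧ ∀ x, σ x ≠ x → G.Adj (σ x) x := by
  obtain ⟨u, p, hp⟩ : ∃ (u : V) (p : G.Walk u u), Odd p.length := by
    simpa [two_colorable_iff_forall_loop_even] using hG
  obtain ⟨v, c, hc, hodd⟩ := p.exists_isCycle_odd_length hp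
  obtain ⟨σ, hcard, hadj⟩ := hc.exists_perm_card_support_eq_length
  exact ⟨σ, hcard ▸ hodd, hadj⟩

end

variable {V : Type*} (G : SimpleGraph V) [DecidableRel G.Adj]

theorem map_adjMatrix {α β : Type*} [Zero α] [One α] [Zero β] [One β] {f : α → β}
    (h₀ : f 0 = 0) (h₁ : f 1 = 1) : (G.adjMatrix α).map f = G.adjMatrix β := by
  ext i j
  by_cases hij : G.Adj i j <;> simp [hij, h₀, h₁]

variable [DecidableEq V] {R : Type*} [CommRing R]

theorem abs_one_sub_adjMatrix_apply [LinearOrder R] [IsStrictOrderedRing R] (i j : V) :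
    |(1 - G.adjMatrix R) i j| = (1 + G.adjMatrix R) i j := by
  obtain rfl | hij := eq_or_ne i j
  · simp
  · by_cases hadj : G.Adj i j <;> simp [Matrix.one_apply_ne hij, hadj]

variable [Fintype V]

theorem prod_one_sub_adjMatrix_perm {σ : Equiv.Perm V} (hσ : ∀ x, σ x ≠ x → G.Adj (σ x) x) :
    ∏ i, (1 - G.adjMatrix R) (σ i) i = (-1) ^ #σ.support := by
  have hentry (i : V) : (1 - G.adjMatrix R) (σ i) i = if σ i = i then 1 else -1 := by
    by_cases hi : σ i = i
    · simp [hi]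
    · simp [Matrix.one_apply_ne hi, hσ i hi, hi]
  rw [prod_congr rfl fun i _ => hentry i, prod_ite, prod_const_one, one_mul, prod_const]
  rfl

theorem permanent_one_sub_adjMatrix_lt [LinearOrder R] [IsStrictOrderedRing R]
    (hG : ¬ G.Colorable 2) : (1 - G.adjMatrix R).permanent < (1 + G.adjMatrix R).permanent := by
  obtain ⟨σ, hodd, hσ⟩ := exists_perm_odd_card_support_of_not_colorable_two hG
  have habs (τ : Equiv.Perm V) :
      |∏ i, (1 - G.adjMatrix R) (τ i) i| = ∏ i, (1 + G.adjMatrix R) (τ i) i := by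
    rw [abs_prod]; exact prod_congr rfl fun i _ => G.abs_one_sub_adjMatrix_apply _ _
  refine sum_lt_sum (fun τ _ => (habs τ).symm ▸ le_abs_self _) ⟨σ, mem_univ _, ?_⟩
  rw [← habs, G.prod_one_sub_adjMatrix_perm hσ, hodd.neg_one_pow]
  norm_num

theorem permPoly_eq_permanentalPoly : permPoly G = (G.adjMatrix ℂ).permanentalPoly := by
  rw [permPoly, Matrix.permanentalPoly, Matrix.charmatrix, RingHom.mapMatrix_apply,
    G.map_adjMatrix C_0 C_1, Matrix.scalar_apply, Matrix.smul_one_eq_diagonal]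
  congr

theorem permanent_one_add_adjMatrix_eq_of_roots_re_eq_zero
    (h : ∀ z ∈ (permPoly G).roots, z.re = 0) :
    (1 + G.adjMatrix ℂ).permanent = (1 - G.adjMatrix ℂ).permanent := by
  set A := G.adjMatrix ℂ
  rw [permPoly_eq_permanentalPoly] at h
  have hreal : A.permanentalPoly.map (starRingEnd ℂ) = A.permanentalPoly := by
    rw [← Matrix.permanentalPoly_map, G.map_adjMatrix (map_zero _) (map_one _)]
  have hsymm := eval_neg_of_roots_map_neg IsAlgClosed.card_roots_eq_natDegree
    (roots_map_neg_of_re_eq_zero hreal h) 1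
  have hneg : Matrix.scalar V (-1 : ℂ) - A = (-1 : ℂ) • (1 + A) := by
    rw [map_neg, map_one, neg_one_smul, neg_add']
  rw [Matrix.eval_permanentalPoly, Matrix.eval_permanentalPoly, map_one, hneg,
    Matrix.permanent_smul, A.natDegree_permanentalPoly] at hsymm
  exact mul_left_cancel₀ (pow_ne_zero _ (by norm_num)) hsymm

end SimpleGraph

/-- If every root of the permanental polynomial of `G` is purely imaginary,
then `G` is bipartite. -/
theorem bipartite_of_purely_imaginary_perSpectrum
    {V : Type*} [Fintype V] [DecidableEq V] (G : SimpleGraph V)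
    (h : ∀ z ∈ (permPoly G).roots, z.re = 0) :
    G.Colorable 2 := by
  classical
  by_contra hG
  refine (G.permanent_one_sub_adjMatrix_lt (R := ℤ) hG).ne (Int.cast_injective (α := ℂ) ?_)
  have hcast (M : Matrix V V ℤ) : (M.permanent : ℂ) = (M.map (Int.castRingHom ℂ)).permanent :=
    RingHom.map_permanent (Int.castRingHom ℂ) M
  rw [hcast, hcast, Matrix.map_sub _ (map_sub _), Matrix.map_add _ (map_add _),
    Matrix.map_one _ (map_zero _) (map_one _), G.map_adjMatrix (map_zero _) (map_one _)]
  exact (G.permanent_one_add_adjMatrix_eq_of_roots_re_eq_zero h).symm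
end

section
/- If all roots of the permanental polynomial π(G,x) of a graph G are real, then G has no edges. -/
/-!
Expanding the permanent, `π(G, x) = per(x I - A)` is monic of degree `n`; its `x ^ (n - 1)`
coefficient vanishes because no permutation moves exactly one vertex, and its `x ^ (n - 2)`
coefficient is the sum of `A x y * A y x` over the transpositions `(x y)`, hence at least `1` once
`G` has an edge. By Vieta the sum of the squares of the roots is then `-2` times that coefficient,
so it is not a nonnegative real; but squares of real roots are nonnegative.
-/

open Polynomial

open Finset Equiv
open scoped ComplexOrder

namespace Multiset

variable {R : Type*} [CommSemiring R]

theorem esymm_one (s : Multiset R) : s.esymm 1 = s.sum := by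
  simp [esymm, powersetCard_one]

theorem esymm_cons_succ (a : R) (s : Multiset R) (k : ℕ) :
    (a ::ₘ s).esymm (k + 1) = a * s.esymm k + s.esymm (k + 1) := by
  simp only [esymm, powersetCard_cons, map_add, sum_add, map_map, Function.comp_def, prod_cons,
    sum_map_mul_left, add_comm]

theorem sq_sum_eq_sum_map_sq_add_two_mul_esymm (s : Multiset R) :
    s.sum ^ 2 = (s.map (· ^ 2)).sum + 2 * s.esymm 2 := by
  induction s using Multiset.induction with
  | empty => simp [esymm, powersetCard_zero_right]
  | cons a s ih =>
    rw [sum_cons, map_cons, sum_cons, esymm_cons_succ, esymm_one, add_sq, ih]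
    ring

end Multiset

theorem Polynomial.Monic.sum_map_sq_roots {R : Type*} [CommRing R] [IsDomain R] {p : R[X]}
    (hp : p.Monic) (hroots : Multiset.card p.roots = p.natDegree) (hdeg : 2 ≤ p.natDegree) :
    (p.roots.map (· ^ 2)).sum =
      p.coeff (p.natDegree - 1) ^ 2 - 2 * p.coeff (p.natDegree - 2) := by
  have h1 := coeff_eq_esymm_roots_of_card hroots (k := p.natDegree - 1) (by omega)
  have h2 := coeff_eq_esymm_roots_of_card hroots (k := p.natDegree - 2) (by omega)
  rw [Nat.sub_sub_self (by omega), hp.leadingCoeff, Multiset.esymm_one] at h1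
  rw [Nat.sub_sub_self hdeg, hp.leadingCoeff] at h2
  rw [h1, h2]
  linear_combination (-1 : R) * p.roots.sq_sum_eq_sum_map_sq_add_two_mul_esymm

theorem Polynomial.Monic.two_mul_coeff_natDegree_sub_two_le {p : ℂ[X]} (hp : p.Monic)
    (hdeg : 2 ≤ p.natDegree) (hreal : ∀ z ∈ p.roots, z.im = 0) :
    2 * p.coeff (p.natDegree - 2) ≤ p.coeff (p.natDegree - 1) ^ 2 := by
  rw [← sub_nonneg, ← hp.sum_map_sq_roots IsAlgClosed.card_roots_eq_natDegree hdeg]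
  exact Multiset.sum_nonneg fun _ hw => by
    obtain ⟨z, hz, rfl⟩ := Multiset.mem_map.mp hw
    exact Complex.sq_nonneg_iff.mpr (hreal z hz)

namespace Matrix

variable {V R : Type*} [Fintype V] [DecidableEq V] [CommRing R] {M : Matrix V V R}

theorem prod_charmatrix_perm_apply (hM : ∀ i, M i i = 0) (σ : Perm V) :
    ∏ i, charmatrix M (σ i) i =
      C (∏ i ∈ σ.support, -M (σ i) i) * X ^ (Fintype.card V - #σ.support) := by
  rw [← prod_mul_prod_compl σ.support, map_prod, ← card_compl]
  congr 1
  · refine prod_congr rfl fun i hi => ?_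
    rw [charmatrix_apply_ne _ _ _ (Perm.mem_support.mp hi), map_neg]
  · rw [← prod_const]
    refine prod_congr rfl fun i hi => ?_
    rw [Perm.notMem_support.mp (mem_compl.mp hi), charmatrix_apply_eq, hM, map_zero, sub_zero]

theorem coeff_permanent_charmatrix (hM : ∀ i, M i i = 0) (d : ℕ) :
    (charmatrix M).permanent.coeff d =
      ∑ σ : Perm V with Fintype.card V - #σ.support = d, ∏ i ∈ σ.support, -M (σ i) i := by
  simp only [permanent, finsetSum_coeff, prod_charmatrix_perm_apply hM, coeff_C_mul_X_pow,
    sum_filter, eq_comm]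

theorem coeff_card_sub_permanent_charmatrix (hM : ∀ i, M i i = 0) {k : ℕ}
    (hk : k ≤ Fintype.card V) :
    (charmatrix M).permanent.coeff (Fintype.card V - k) =
      ∑ σ : Perm V with #σ.support = k, ∏ i ∈ σ.support, -M (σ i) i := by
  rw [coeff_permanent_charmatrix hM]
  refine sum_congr (filter_congr fun σ _ => ?_) fun _ _ => rfl
  have := card_le_univ σ.support
  omega

theorem coeff_card_permanent_charmatrix (hM : ∀ i, M i i = 0) :
    (charmatrix M).permanent.coeff (Fintype.card V) = 1 := by
  simpa [Perm.card_support_eq_zero, filter_eq'] using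
    coeff_card_sub_permanent_charmatrix hM (Nat.zero_le _)

theorem natDegree_permanent_charmatrix_le (hM : ∀ i, M i i = 0) :
    (charmatrix M).permanent.natDegree ≤ Fintype.card V := by
  refine natDegree_le_iff_coeff_eq_zero.mpr fun d hd => ?_
  rw [coeff_permanent_charmatrix hM]
  refine sum_eq_zero fun σ hσ => absurd (mem_filter.mp hσ).2 ?_
  omega

theorem monic_permanent_charmatrix (hM : ∀ i, M i i = 0) : (charmatrix M).permanent.Monic :=
  monic_of_natDegree_le_of_coeff_eq_one _ (natDegree_permanent_charmatrix_le hM)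
    (coeff_card_permanent_charmatrix hM)

theorem natDegree_permanent_charmatrix [Nontrivial R] (hM : ∀ i, M i i = 0) :
    (charmatrix M).permanent.natDegree = Fintype.card V :=
  (natDegree_permanent_charmatrix_le hM).antisymm <|
    le_natDegree_of_ne_zero <| by simp [coeff_card_permanent_charmatrix hM]

theorem coeff_card_sub_one_permanent_charmatrix (hM : ∀ i, M i i = 0)
    (hV : 1 ≤ Fintype.card V) :
    (charmatrix M).permanent.coeff (Fintype.card V - 1) = 0 := by
  simp [coeff_card_sub_permanent_charmatrix hM hV, Perm.card_support_ne_one]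

theorem prod_support_swap_neg_apply {x y : V} (hxy : x ≠ y) :
    ∏ i ∈ (Equiv.swap x y).support, -M (Equiv.swap x y i) i = M x y * M y x := by
  rw [Perm.support_swap hxy, prod_pair hxy, swap_apply_left, swap_apply_right, neg_mul_neg,
    mul_comm]

end Matrix

open Matrix

section
variable {V : Type*} [Fintype V] [DecidableEq V] (G : SimpleGraph V)

theorem permPoly_eq_permanent_charmatrix [DecidableRel G.Adj] :
    permPoly G = (charmatrix (G.adjMatrix ℂ)).permanent := by
  unfold permPoly
  congr 1
  ext i j : 1
  by_cases h : i = j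
  · simp [h, charmatrix_apply_eq]
  · simp [h, SimpleGraph.adjMatrix_apply, apply_ite C]

theorem permPoly_monic : (permPoly G).Monic := by
  classical
  rw [permPoly_eq_permanent_charmatrix]
  exact monic_permanent_charmatrix (G.isAdjMatrix_adjMatrix (α := ℂ)).apply_diag

theorem natDegree_permPoly : (permPoly G).natDegree = Fintype.card V := by
  classical
  rw [permPoly_eq_permanent_charmatrix]
  exact natDegree_permanent_charmatrix (G.isAdjMatrix_adjMatrix (α := ℂ)).apply_diag

theorem coeff_permPoly_card_sub_one (hV : 1 ≤ Fintype.card V) :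
    (permPoly G).coeff (Fintype.card V - 1) = 0 := by
  classical
  rw [permPoly_eq_permanent_charmatrix]
  exact coeff_card_sub_one_permanent_charmatrix (G.isAdjMatrix_adjMatrix (α := ℂ)).apply_diag hV

theorem one_le_coeff_permPoly_card_sub_two {u v : V} (huv : G.Adj u v) :
    1 ≤ (permPoly G).coeff (Fintype.card V - 2) := by
  classical
  have hV : 2 ≤ Fintype.card V := Fintype.one_lt_card_iff.mpr ⟨u, v, G.ne_of_adj huv⟩
  have hswap (x y : V) (hxy : x ≠ y) :
      ∏ i ∈ (Equiv.swap x y).support, -G.adjMatrix ℂ (Equiv.swap x y i) i =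
        if G.Adj x y then 1 else 0 := by
    rw [prod_support_swap_neg_apply hxy]
    by_cases h : G.Adj x y <;> simp [h, G.adj_comm]
  rw [permPoly_eq_permanent_charmatrix,
    coeff_card_sub_permanent_charmatrix (G.isAdjMatrix_adjMatrix (α := ℂ)).apply_diag hV]
  calc (1 : ℂ) = ∏ i ∈ (Equiv.swap u v).support, -G.adjMatrix ℂ (Equiv.swap u v i) i := by
        rw [hswap u v (G.ne_of_adj huv), if_pos huv]
    _ ≤ _ := by
      refine single_le_sum (f := fun σ : Perm V => ∏ i ∈ σ.support, -G.adjMatrix ℂ (σ i) i)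
        (fun σ hσ => ?_)
        (mem_filter.mpr ⟨mem_univ _, Perm.card_support_swap (G.ne_of_adj huv)⟩)
      obtain ⟨x, y, hxy, rfl⟩ := Perm.card_support_eq_two.mp (mem_filter.mp hσ).2
      rw [hswap x y hxy]
      split_ifs <;> simp

end

/-- If all roots of the permanental polynomial of `G` are real,
then `G` has no edges. -/
theorem edgeless_of_real_perSpectrum
    {V : Type*} [Fintype V] [DecidableEq V] (G : SimpleGraph V)
    (h : ∀ z ∈ (permPoly G).roots, z.im = 0) :
    ∀ u v : V, ¬ G.Adj u v := by
  intro u v huv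
  have hV : 2 ≤ Fintype.card V := Fintype.one_lt_card_iff.mpr ⟨u, v, G.ne_of_adj huv⟩
  have hdeg := natDegree_permPoly G
  have hsq := (permPoly_monic G).two_mul_coeff_natDegree_sub_two_le (hdeg ▸ hV) h
  rw [hdeg, coeff_permPoly_card_sub_one G (by omega), zero_pow two_ne_zero] at hsq
  have hpos := one_le_coeff_permPoly_card_sub_two G huv
  have h20 : (2 : ℂ) ≤ 0 := by
    simpa using (mul_le_mul_of_nonneg_left hpos zero_le_two).trans hsq
  norm_num [Complex.le_def] at h20
end

section
/- Every root of the permanental polynomial of any tree is purely imaginary; more precisely, if T is a tree with adjacency eigenvalues λ_1,…,λ_n, then the roots of π(T,x) are iλ_1,…,iλ_n. -/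
open Polynomial

/-! In a forest, a permutation `σ` sending every vertex it moves to a neighbour is an involution:
otherwise the orbit of `σ v` would connect `σ v` to `v` without the edge `s(v, σ v)`, which
is a bridge. Such a `σ` is a product of `k` disjoint edge transpositions, so its term in
`per (X • 1 - A)` is `X ^ (n - 2k)`, and so is its signed term in `det (X • 1 - I • A)`, because
`sign σ * (-I) ^ (2k) = (-1) ^ k * (-1) ^ k = 1`; every other term vanishes in both expansions.
Hence `π(T, X)` is the characteristic polynomial of `I • A`, whose roots are `I` times those of `A`.
-/

open Finset

namespace Equiv.Perm

variable {α : Type*} [Fintype α] [DecidableEq α] {σ : Perm α}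

theorem even_card_support_of_sq_eq_one (hσ : σ ^ 2 = 1) : Even #σ.support := by
  rw [← sum_cycleType, cycleType_of_pow_prime_eq_one hσ, Multiset.sum_replicate, smul_eq_mul]
  exact even_two.mul_left _

theorem sign_eq_neg_one_pow_card_support_div_two (hσ : σ ^ 2 = 1) :
    sign σ = (-1) ^ (#σ.support / 2) := by
  rw [sign_of_pow_two_eq_one hσ, card_fixedPoints, sum_cycleType,
    Nat.sub_sub_self σ.support.card_le_univ]

end Equiv.Perm

namespace SimpleGraph

theorem IsAcyclic.involutive_of_forall_adj_apply {V : Type*} [Finite V] {G : SimpleGraph V}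
    (hG : G.IsAcyclic) {σ : Equiv.Perm V} (hσ : ∀ v, σ v ≠ v → G.Adj v (σ v)) :
    Function.Involutive σ := by
  intro v
  by_contra hv₂
  have hv : σ v ≠ v := fun h => hv₂ (by rw [h, h])
  set G' := G.deleteEdges {s(v, σ v)}
  -- Following the orbit of `σ v` never needs the edge `s(v, σ v)` before reaching `v`.
  have key : ∀ m : ℕ, G'.Reachable (σ v) ((σ ^ m) (σ v)) ∨ G'.Reachable (σ v) v := by
    intro m
    induction m with
    | zero => exact .inl .rfl
    | succ m ih =>
      rw [pow_succ', Equiv.Perm.mul_apply]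
      set w := (σ ^ m) (σ v)
      rcases ih with hw | hv'
      swap
      · exact .inr hv'
      by_cases hfix : σ w = w
      · rw [hfix]; exact .inl hw
      by_cases he : s(w, σ w) = s(v, σ v)
      · rcases Sym2.eq_iff.mp he with ⟨hwv, -⟩ | ⟨hwv, hσw⟩
        · exact .inr (hwv ▸ hw)
        · exact absurd (hwv ▸ hσw) hv₂
      · exact .inl (hw.trans (deleteEdges_adj.mpr ⟨hσ w hfix, he⟩).reachable)
  obtain ⟨m, hm⟩ := (Equiv.Perm.SameCycle.refl σ v).apply_left.exists_nat_pow_eq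
  have hreach : G'.Reachable (σ v) v := by simpa [hm] using key m
  exact isAcyclic_iff_forall_adj_isBridge.mp hG (hσ v hv) hreach.symm

end SimpleGraph

namespace Matrix

variable {n : Type*} [Fintype n] [DecidableEq n]

theorem charpoly_smul_eq_scaleRoots {K : Type*} [Field K] [Infinite K] {c : K} (hc : c ≠ 0)
    (M : Matrix n n K) : (c • M).charpoly = M.charpoly.scaleRoots c := by
  refine Polynomial.funext fun x => ?_
  obtain ⟨y, rfl⟩ : ∃ y, x = c * y := ⟨c⁻¹ * x, by field_simp⟩
  rw [scaleRoots_eval_mul, charpoly_natDegree_eq_dim, eval_charpoly, eval_charpoly,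
    ← det_smul, smul_sub, scalar_apply, scalar_apply, ← diagonal_smul]; rfl

end Matrix

theorem permPoly_eq_permanent_charmatrix_s7 {V : Type*} [Fintype V] [DecidableEq V]
    (G : SimpleGraph V) [DecidableRel G.Adj] :
    permPoly G = (G.adjMatrix ℂ).charmatrix.permanent := by
  have : permPoly G = ((X : ℂ[X]) • (1 : Matrix V V ℂ[X]) - G.adjMatrix ℂ[X]).permanent := by
    unfold permPoly
    congr!
  rw [this]
  congr 1
  ext i j : 1
  by_cases h : i = j
  · subst h; simp
  · simp [h, SimpleGraph.adjMatrix_apply]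

namespace SimpleGraph

variable {V R : Type*} [Fintype V] [DecidableEq V] [CommRing R]
  (G : SimpleGraph V) [DecidableRel G.Adj]

theorem prod_charmatrix_smul_adjMatrix_of_forall_adj (c : R) {σ : Equiv.Perm V}
    (hσ : ∀ v, σ v ≠ v → G.Adj v (σ v)) :
    ∏ v, (c • G.adjMatrix R).charmatrix (σ v) v = (-C c) ^ #σ.support * X ^ #σ.supportᶜ := by
  rw [← prod_mul_prod_compl σ.support, ← prod_const, ← prod_const]
  congr 1 <;> refine prod_congr rfl fun v hv => ?_
  · have hv : σ v ≠ v := Equiv.Perm.mem_support.mp hv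
    simp [Matrix.charmatrix_apply_ne _ _ _ hv, adjMatrix_apply, (hσ v hv).symm]
  · have hv : σ v = v := Equiv.Perm.notMem_support.mp (mem_compl.mp hv)
    simp [hv, Matrix.charmatrix_apply_eq, adjMatrix_apply]

theorem prod_charmatrix_smul_adjMatrix_eq_zero (c : R) {σ : Equiv.Perm V} {v : V}
    (hv : σ v ≠ v) (hnadj : ¬G.Adj v (σ v)) :
    ∏ v, (c • G.adjMatrix R).charmatrix (σ v) v = 0 := by
  have hnadj' : ¬G.Adj (σ v) v := fun h => hnadj h.symm
  exact prod_eq_zero (mem_univ v) <| by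
    simp [Matrix.charmatrix_apply_ne _ _ _ hv, adjMatrix_apply, hnadj']

end SimpleGraph

theorem permPoly_eq_charpoly_I_smul {V : Type*} [Fintype V] [DecidableEq V]
    {G : SimpleGraph V} [DecidableRel G.Adj] (hG : G.IsAcyclic) :
    permPoly G = (Complex.I • G.adjMatrix ℂ).charpoly := by
  rw [permPoly_eq_permanent_charmatrix_s7, Matrix.permanent, Matrix.charpoly, Matrix.det_apply]
  refine sum_congr rfl fun σ _ => ?_
  by_cases hσ : ∀ v, σ v ≠ v → G.Adj v (σ v)
  · have hsq : σ ^ 2 = 1 := Equiv.Perm.ext fun v => hG.involutive_of_forall_adj_apply hσ v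
    obtain ⟨k, hk⟩ := Equiv.Perm.even_card_support_of_sq_eq_one hsq
    have hA := G.prod_charmatrix_smul_adjMatrix_of_forall_adj (1 : ℂ) hσ
    rw [one_smul] at hA
    rw [hA, G.prod_charmatrix_smul_adjMatrix_of_forall_adj Complex.I hσ,
      Equiv.Perm.sign_eq_neg_one_pow_card_support_div_two hsq, hk]
    have hI : (-C Complex.I) ^ 2 = -1 := by
      rw [neg_sq, ← C_pow, Complex.I_sq, C_neg, C_1]
    rw [← two_mul, Nat.mul_div_cancel_left _ two_pos, pow_mul, pow_mul, hI, neg_sq, C_1,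
      one_pow, one_pow, Units.smul_def, zsmul_eq_mul, ← mul_assoc]
    push_cast
    rw [← mul_pow, neg_one_mul, neg_neg, one_pow]
  · push Not at hσ
    obtain ⟨v, hv, hnadj⟩ := hσ
    have hA := G.prod_charmatrix_smul_adjMatrix_eq_zero (1 : ℂ) hv hnadj
    rw [one_smul] at hA
    rw [hA, G.prod_charmatrix_smul_adjMatrix_eq_zero Complex.I hv hnadj, smul_zero]

/-- For a tree `T` whose adjacency eigenvalues are `λ_1, …, λ_n`, the roots of
the permanental polynomial of `T` are exactly `iλ_1, …, iλ_n`. -/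
theorem tree_perSpectrum_purely_imaginary
    {V : Type*} [Fintype V] [DecidableEq V] (T : SimpleGraph V)
    [DecidableRel T.Adj] (hT : T.IsTree) :
    (permPoly T).roots =
      ((T.adjMatrix ℂ).charpoly.roots).map (fun l => Complex.I * l) := by
  rw [permPoly_eq_charpoly_I_smul hT.isAcyclic,
    Matrix.charpoly_smul_eq_scaleRoots Complex.I_ne_zero,
    roots_scaleRoots _ (isUnit_iff_ne_zero.mpr Complex.I_ne_zero)]
end

section
/- Let (G_1, r_1) be a rooted graph and let (T, r_2) be a rooted tree whose root has k children, each the root of a copy of the same rooted tree (T', u'). Let G = G_1 · T be the coalescence identifying r_1 with r_2. Then π(G, x) = π(T', x)^{k−1} · ( π(G_1, x)·π(T', x) + k·π(G_1 − r_1, x)·π(T' − u', x) ). In particular, G has purely imaginary per-spectrum if and only if the polynomial H(x) = π(G_1,x)·π(T',x) + k·π(G_1−r_1,x)·π(T'−u',x) has all roots purely imaginary. -/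
/-!
Split the row of a cut vertex `r` of `xI - A` into its entries on `r`'s own side and those on the
other side; by multilinearity the permanent is the sum of the two resulting permanents. The first
matrix is block triangular, and so is the second once `r` is moved to the other side. This gives
Schwenk's formula `π(G₁ · G₂) = π(G₁) π(G₂ - r₂) + π(G₁ - r₁) (π(G₂) - x π(G₂ - r₂))`.
For `G₂ = R(T'^(k), r₂)` the graph `G₂ - r₂` is `k` disjoint copies of `T'`, and splitting off one
branch at a time (the root together with one branch is `T'` with a pendant vertex at `u'`) gives
`π(G₂) = x π(T')^k + k π(T' - u') π(T')^(k-1)`. Substituting yields the factorisation.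

In a forest the only permutations contributing to `per(xI - A)` are involutions along edges, so
`π(T') = det(xI - iA)`, whose roots are `i` times the real eigenvalues of the symmetric matrix `A`.
Hence the factor `π(T')^(k-1)` only contributes purely imaginary roots.
-/

open Polynomial

/-- The coalescence `G₁ · G₂` of rooted graphs `(G₁, r₁)` and `(G₂, r₂)`,
obtained by identifying `r₁` with `r₂`. -/
def coalesce {V₁ V₂ : Type*} (G₁ : SimpleGraph V₁) (r₁ : V₁)
    (G₂ : SimpleGraph V₂) (r₂ : V₂) :
    SimpleGraph (V₁ ⊕ {v : V₂ // v ≠ r₂}) :=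
  SimpleGraph.fromRel fun x y =>
    match x, y with
    | .inl a, .inl b => G₁.Adj a b
    | .inl a, .inr b => a = r₁ ∧ G₂.Adj r₂ b.1
    | .inr a, .inl b => b = r₁ ∧ G₂.Adj r₂ a.1
    | .inr a, .inr b => G₂.Adj a.1 b.1

/-- The rooted tree `R(T'^(k), r)` whose root (the vertex `Sum.inl ()`) has `k`
children, each of which is the root `u'` of a copy of the rooted tree
`(T', u')`. -/
def starTree {V' : Type*} (k : ℕ) (T' : SimpleGraph V') (u' : V') :
    SimpleGraph (Unit ⊕ Fin k × V') :=
  SimpleGraph.fromRel fun x y =>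
    match x, y with
    | .inl _, .inr (_, b) => b = u'
    | .inr (_, a), .inl _ => a = u'
    | .inr (i, a), .inr (j, b) => i = j ∧ T'.Adj a b
    | .inl _, .inl _ => False

namespace Matrix

open Sum

variable {m n : Type*} [Fintype m] [DecidableEq m] [Fintype n] [DecidableEq n]

section CommSemiring

variable {R : Type*} [CommSemiring R]

theorem permanent_updateRow_add (M : Matrix n n R) (j : n) (u v : n → R) :
    (M.updateRow j (u + v)).permanent
      = (M.updateRow j u).permanent + (M.updateRow j v).permanent := by
  simp only [permanent, ← Finset.sum_add_distrib]
  refine Finset.sum_congr rfl fun σ _ => ?_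
  simp only [← Finset.mul_prod_erase Finset.univ _ (Finset.mem_univ (σ.symm j)),
    Equiv.apply_symm_apply, updateRow_self, Pi.add_apply, add_mul]
  have hrest (w : n → R) : ∏ i ∈ Finset.univ.erase (σ.symm j), M.updateRow j w (σ i) i
      = ∏ i ∈ Finset.univ.erase (σ.symm j), M (σ i) i :=
    Finset.prod_congr rfl fun i hi => by
      rw [updateRow_ne fun h => Finset.ne_of_mem_erase hi (by rw [← h, Equiv.symm_apply_apply])]
  rw [hrest, hrest, hrest]

theorem permanent_submatrix_equiv_self (e : n ≃ m) (A : Matrix m m R) :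
    (A.submatrix e e).permanent = A.permanent := by
  refine Fintype.sum_equiv (Equiv.permCongr e) _ _ fun σ => ?_
  refine Fintype.prod_equiv e _ _ fun i => ?_
  simp [Equiv.permCongr_apply]

theorem permanent_fromBlocks_zero₂₁ (A : Matrix m m R) (B : Matrix m n R) (D : Matrix n n R) :
    (fromBlocks A B 0 D).permanent = A.permanent * D.permanent := by
  have hinj : Function.Injective (Equiv.Perm.sumCongrHom m n) := Equiv.Perm.sumCongrHom_injective
  rw [permanent, ← Finset.sum_subset (Finset.subset_univ
      (Finset.univ.image (Equiv.Perm.sumCongrHom m n))),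
    Finset.sum_image (fun _ _ _ _ h => hinj h), permanent, permanent, Finset.sum_mul_sum,
    ← Finset.sum_product']
  · refine Finset.sum_congr rfl fun σ _ => ?_
    simp [Fintype.prod_sum_type]
  · intro σ _ hσ
    have hmaps : ¬ Set.MapsTo σ (Set.range inl) (Set.range inl) := fun h =>
      hσ (by simpa using Equiv.Perm.mem_sumCongrHom_range_of_perm_mapsTo_inl h)
    obtain ⟨a, ha⟩ : ∃ a, ∀ a', inl a' ≠ σ (inl a) := by simpa [Set.MapsTo] using hmaps
    obtain ⟨b, hab⟩ : ∃ b, σ (inl a) = inr b := by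
      rcases hx : σ (inl a) with a' | b
      exacts [(ha a' hx.symm).elim, ⟨b, rfl⟩]
    exact Finset.prod_eq_zero (Finset.mem_univ (inl a)) (by simp [hab])

theorem permanent_fromBlocks_zero₁₂ (A : Matrix m m R) (C : Matrix n m R) (D : Matrix n n R) :
    (fromBlocks A 0 C D).permanent = A.permanent * D.permanent := by
  rw [← permanent_transpose, fromBlocks_transpose, transpose_zero, permanent_fromBlocks_zero₂₁,
    permanent_transpose, permanent_transpose]

theorem permanent_eq_add_permanent_updateRow (M : Matrix (m ⊕ n) (m ⊕ n) R) (r : m)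
    (h : ∀ a b, a ≠ r → M (inl a) (inr b) = 0) :
    M.permanent = (M.submatrix inl inl).permanent * (M.submatrix inr inr).permanent
      + (M.updateRow (inl r) (Sum.elim (0 : m → R) fun b => M (inl r) (inr b))).permanent := by
  set u : m ⊕ n → R := Sum.elim (fun a => M (inl r) (inl a)) 0
  set v : m ⊕ n → R := Sum.elim (0 : m → R) fun b => M (inl r) (inr b)
  set N := M.updateRow (inl r) u
  have hN₁₂ : N.toBlocks₁₂ = 0 := by
    ext a b
    by_cases ha : a = r <;> simp [N, u, toBlocks₁₂, updateRow_apply, ha, h]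
  have hN₁₁ : N.toBlocks₁₁ = M.submatrix inl inl := by
    ext a a'
    by_cases ha : a = r <;> simp [N, u, toBlocks₁₁, updateRow_apply, ha]
  have hN₂₂ : N.toBlocks₂₂ = M.submatrix inr inr := by
    ext b b'
    simp [N, toBlocks₂₂, updateRow_apply]
  calc M.permanent = (M.updateRow (inl r) (u + v)).permanent := by
        rw [show u + v = M (inl r) by ext (a | b) <;> simp [u, v], updateRow_eq_self]
    _ = N.permanent + (M.updateRow (inl r) v).permanent := permanent_updateRow_add M _ u v
    _ = _ := by rw [← fromBlocks_toBlocks N, hN₁₂, permanent_fromBlocks_zero₁₂, hN₁₁, hN₂₂]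

theorem permanent_unit_sum_unit (M : Matrix (Unit ⊕ Unit) (Unit ⊕ Unit) R) :
    M.permanent = M (inl ()) (inl ()) * M (inr ()) (inr ())
      + M (inl ()) (inr ()) * M (inr ()) (inl ()) := by
  have huniv : (Finset.univ : Finset (Equiv.Perm (Unit ⊕ Unit)))
      = {1, Equiv.swap (inl ()) (inr ())} := by
    decide
  rw [permanent, huniv, Finset.sum_pair (by decide)]
  simp [mul_comm]

end CommSemiring

def cutEquiv (r : m) : {a // a ≠ r} ⊕ (Unit ⊕ n) ≃ m ⊕ n where
  toFun := Sum.elim (inl ∘ Subtype.val) (Sum.elim (fun _ => inl r) inr)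
  invFun := Sum.elim (fun a => if h : a = r then inr (inl ()) else inl ⟨a, h⟩) (inr ∘ inr)
  left_inv := by rintro (⟨a, ha⟩ | _ | b) <;> simp_all
  right_inv := by
    rintro (a | b)
    · by_cases h : a = r <;> simp [h]
    · rfl

theorem permanent_eq_of_cutVertex {R : Type*} [CommRing R] (M : Matrix (m ⊕ n) (m ⊕ n) R)
    (r : m) (h₁ : ∀ a b, a ≠ r → M (inl a) (inr b) = 0)
    (h₂ : ∀ a b, a ≠ r → M (inr b) (inl a) = 0) :
    M.permanent = (M.submatrix inl inl).permanent * (M.submatrix inr inr).permanent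
      + (M.submatrix (inl ∘ Subtype.val) (inl ∘ Subtype.val) :
          Matrix {a // a ≠ r} {a // a ≠ r} R).permanent
        * ((M.submatrix (Sum.elim (fun _ => inl r) inr) (Sum.elim (fun _ => inl r) inr) :
            Matrix (Unit ⊕ n) (Unit ⊕ n) R).permanent
          - M (inl r) (inl r) * (M.submatrix inr inr).permanent) := by
  set C : Matrix (Unit ⊕ n) (Unit ⊕ n) R :=
    M.submatrix (Sum.elim (fun _ => inl r) inr) (Sum.elim (fun _ => inl r) inr)
  have hC := permanent_eq_add_permanent_updateRow C () (by simp)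
  rw [permanent_unique (C.submatrix inl inl)] at hC
  set N := (M.updateRow (inl r) (Sum.elim (0 : m → R) fun b => M (inl r) (inr b))).submatrix
    (cutEquiv r) (cutEquiv r)
  have hN₂₁ : N.toBlocks₂₁ = 0 := by
    ext (_ | b) ⟨a, ha⟩ <;> simp [N, cutEquiv, toBlocks₂₁, updateRow_apply, ha, h₂]
  have hN₁₁ : N.toBlocks₁₁ = M.submatrix (inl ∘ Subtype.val) (inl ∘ Subtype.val) := by
    ext ⟨a, ha⟩ a'
    simp [N, cutEquiv, toBlocks₁₁, updateRow_apply, ha]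
  have hN₂₂ : N.toBlocks₂₂ = C.updateRow (inl ()) (Sum.elim 0 fun b => C (inl ()) (inr b)) := by
    ext (_ | b) (_ | b') <;> simp [N, C, cutEquiv, toBlocks₂₂, updateRow_apply]
  rw [permanent_eq_add_permanent_updateRow M r h₁, ← permanent_submatrix_equiv_self (cutEquiv r)]
  change _ + N.permanent = _
  rw [← fromBlocks_toBlocks N, hN₂₁, permanent_fromBlocks_zero₂₁, hN₁₁, hN₂₂, hC]
  simp [C]

end Matrix

open Sum

theorem SimpleGraph.ne_and_adj_or_adj_iff {V : Type*} (G : SimpleGraph V) (a b : V) :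
    (¬a = b ∧ (G.Adj a b ∨ G.Adj b a)) ↔ G.Adj a b := by
  rw [G.adj_comm b a, or_self, and_iff_right_of_imp SimpleGraph.Adj.ne]

section permMatrix

variable {V W : Type*}

open Classical in
noncomputable def permMatrix (G : SimpleGraph V) : Matrix V V ℂ[X] :=
  Matrix.of fun i j => if i = j then X else if G.Adj i j then -1 else 0

theorem permMatrix_diag (G : SimpleGraph V) (i : V) : permMatrix G i i = X := by
  simp [permMatrix]

theorem permMatrix_eq_zero {G : SimpleGraph V} {i j : V} (hij : i ≠ j) (h : ¬ G.Adj i j) :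
    permMatrix G i j = 0 := by
  simp [permMatrix, hij, h]

theorem permMatrix_comap (G : SimpleGraph V) {f : W → V} (hf : Function.Injective f) :
    permMatrix (G.comap f) = (permMatrix G).submatrix f f :=
  Matrix.ext fun i j => by
    simp only [permMatrix, Matrix.of_apply, Matrix.submatrix_apply]
    split_ifs <;> simp_all [hf.eq_iff]

theorem permPoly_eq_permanent [Fintype V] [DecidableEq V] (G : SimpleGraph V) :
    permPoly G = (permMatrix G).permanent := by
  unfold permPoly
  congr 1
  ext i j
  by_cases hij : i = j
  · simp [hij, permMatrix]
  · by_cases h : G.Adj i j <;> simp [permMatrix, hij, h]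

theorem permPoly_comap [Fintype W] [DecidableEq W] (G : SimpleGraph V) {f : W → V}
    (hf : Function.Injective f) :
    permPoly (G.comap f) = ((permMatrix G).submatrix f f).permanent := by
  rw [permPoly_eq_permanent, permMatrix_comap G hf]

theorem permPoly_comap_equiv [Fintype V] [DecidableEq V] [Fintype W] [DecidableEq W]
    (G : SimpleGraph V) (e : W ≃ V) : permPoly (G.comap e) = permPoly G := by
  rw [permPoly_comap G e.injective, Matrix.permanent_submatrix_equiv_self, permPoly_eq_permanent]

theorem permPoly_induce_ne_inl [Fintype W] [DecidableEq W] (H : SimpleGraph (Unit ⊕ W)) :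
    permPoly (H.induce {v | v ≠ inl ()}) = permPoly (H.comap inr) := by
  let e : W ≃ {v : Unit ⊕ W // v ≠ inl ()} := Equiv.ofBijective (fun b => ⟨inr b, inr_ne_inl⟩)
    ⟨fun _ _ h => inr_injective (congrArg Subtype.val h), fun
      | ⟨inl (), h⟩ => (h rfl).elim
      | ⟨inr b, _⟩ => ⟨b, rfl⟩⟩
  rw [← permPoly_comap_equiv _ e]
  rfl

end permMatrix

section cutVertex

variable {α β : Type*} [Fintype α] [DecidableEq α] [Fintype β] [DecidableEq β]

theorem permPoly_eq_mul_of_forall_not_adj (G : SimpleGraph (α ⊕ β))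
    (h : ∀ a b, ¬ G.Adj (inl a) (inr b)) :
    permPoly G = permPoly (G.comap inl) * permPoly (G.comap inr) := by
  have h₁₂ : (permMatrix G).toBlocks₁₂ = 0 :=
    Matrix.ext fun a b => permMatrix_eq_zero inl_ne_inr (h a b)
  rw [permPoly_eq_permanent, ← Matrix.fromBlocks_toBlocks (permMatrix G), h₁₂,
    Matrix.permanent_fromBlocks_zero₁₂, permPoly_comap G inl_injective,
    permPoly_comap G inr_injective]
  rfl

theorem permPoly_eq_of_cutVertex (G : SimpleGraph (α ⊕ β)) (r : α)
    (h : ∀ a b, G.Adj (inl a) (inr b) → a = r) :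
    permPoly G = permPoly (G.comap inl) * permPoly (G.comap inr)
      + permPoly ((G.comap inl).induce {a | a ≠ r})
        * (permPoly (G.comap (Sum.elim (fun _ : Unit => inl r) inr))
          - X * permPoly (G.comap inr)) := by
  have hC : Function.Injective (Sum.elim (fun _ : Unit => (inl r : α ⊕ β)) inr) :=
    Function.Injective.sumElim (fun _ _ _ => rfl) inr_injective fun _ _ => inl_ne_inr
  rw [permPoly_eq_permanent, Matrix.permanent_eq_of_cutVertex _ r
      (fun a b ha => permMatrix_eq_zero inl_ne_inr fun hab => ha (h a b hab))
      (fun a b ha => permMatrix_eq_zero inr_ne_inl fun hab => ha (h a b hab.symm)),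
    permPoly_comap G inl_injective, permPoly_comap G inr_injective, permPoly_comap G hC,
    permPoly_comap _ (Function.Embedding.injective _), permMatrix_comap G inl_injective,
    Matrix.submatrix_submatrix, permMatrix_diag]
  rfl

theorem permPoly_eq_of_pendant (H : SimpleGraph (Unit ⊕ β)) (r : β)
    (h : ∀ b, H.Adj (inl ()) (inr b) ↔ b = r) :
    permPoly H = X * permPoly (H.comap inr) + permPoly ((H.comap inr).induce {b | b ≠ r}) := by
  rw [← permPoly_comap_equiv H (Equiv.sumComm β Unit),
    permPoly_eq_of_cutVertex _ r fun b _ hb => (h b).1 hb.symm]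
  have hleaf : permPoly ((H.comap (Equiv.sumComm β Unit)).comap inr) = X := by
    rw [permPoly_eq_permanent, Matrix.permanent_unique, permMatrix_diag]
  have hedge : permPoly ((H.comap (Equiv.sumComm β Unit)).comap
      (Sum.elim (fun _ : Unit => inl r) inr)) = X * X + 1 := by
    rw [permPoly_eq_permanent, Matrix.permanent_unit_sum_unit]
    simp [permMatrix, (h r).2 rfl, ((h r).2 rfl).symm]
  rw [hleaf, hedge]
  change permPoly (H.comap inr) * X + permPoly ((H.comap inr).induce {b | b ≠ r}) * _ = _
  ring

end cutVertex

theorem permPoly_coalesce {V₁ V₂ : Type*} [Fintype V₁] [DecidableEq V₁] [Fintype V₂]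
    [DecidableEq V₂] (G₁ : SimpleGraph V₁) (r₁ : V₁) (G₂ : SimpleGraph V₂) (r₂ : V₂) :
    permPoly (coalesce G₁ r₁ G₂ r₂) = permPoly G₁ * permPoly (G₂.induce {v | v ≠ r₂})
      + permPoly (G₁.induce {v | v ≠ r₁})
        * (permPoly G₂ - X * permPoly (G₂.induce {v | v ≠ r₂})) := by
  have hA : (coalesce G₁ r₁ G₂ r₂).comap inl = G₁ := by
    ext a b
    simp [coalesce, SimpleGraph.ne_and_adj_or_adj_iff]
  have hD : (coalesce G₁ r₁ G₂ r₂).comap inr = G₂.induce {v | v ≠ r₂} := by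
    ext a b
    simp [coalesce, Subtype.ext_iff, SimpleGraph.ne_and_adj_or_adj_iff]
  let e : Unit ⊕ {v // v ≠ r₂} ≃ V₂ :=
    { toFun := Sum.elim (fun _ => r₂) Subtype.val
      invFun := fun v => if h : v = r₂ then inl () else inr ⟨v, h⟩
      left_inv := by rintro (_ | ⟨v, hv⟩) <;> simp_all
      right_inv := fun v => by by_cases h : v = r₂ <;> simp [h] }
  have hC : permPoly ((coalesce G₁ r₁ G₂ r₂).comap (Sum.elim (fun _ : Unit => inl r₁) inr))
      = permPoly G₂ := by
    convert permPoly_comap_equiv G₂ e using 2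
    ext (_ | a) (_ | b) <;>
      simp [e, coalesce, Subtype.ext_iff, SimpleGraph.ne_and_adj_or_adj_iff, G₂.adj_comm _ r₂]
  rw [permPoly_eq_of_cutVertex _ r₁ (by simp [coalesce]; tauto), hA, hD, hC]

section starTree

variable {V' : Type*} [Fintype V'] [DecidableEq V'] (T' : SimpleGraph V') (u' : V')

def finSuccProdEquiv (k : ℕ) (V : Type*) : (Fin k × V) ⊕ V ≃ Fin (k + 1) × V where
  toFun := Sum.elim (Prod.map Fin.castSucc id) (Prod.mk (Fin.last k))
  invFun p := Fin.lastCases (inr p.2) (fun i => inl (i, p.2)) p.1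
  left_inv := by rintro (⟨i, a⟩ | a) <;> simp
  right_inv := by
    rintro ⟨i, a⟩
    induction i using Fin.lastCases <;> simp

def starTreeSuccEquiv (k : ℕ) (V : Type*) : (Unit ⊕ Fin k × V) ⊕ V ≃ Unit ⊕ Fin (k + 1) × V :=
  (Equiv.sumAssoc _ _ _).trans (Equiv.sumCongr (Equiv.refl _) (finSuccProdEquiv k V))

theorem permPoly_starTree_comap_inr (k : ℕ) :
    permPoly ((starTree k T' u').comap inr) = permPoly T' ^ k := by
  induction k with
  | zero => rw [permPoly_eq_permanent, Matrix.permanent_isEmpty, pow_zero]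
  | succ k ih =>
    set G := ((starTree (k + 1) T' u').comap inr).comap (finSuccProdEquiv k V')
    have hA : G.comap inl = (starTree k T' u').comap inr := by
      ext ⟨i, a⟩ ⟨j, b⟩
      simp [G, starTree, finSuccProdEquiv]
    have hD : G.comap inr = T' := by
      ext a b
      simp [G, starTree, finSuccProdEquiv, SimpleGraph.ne_and_adj_or_adj_iff]
    rw [← permPoly_comap_equiv _ (finSuccProdEquiv k V'), permPoly_eq_mul_of_forall_not_adj G
      (by simp [G, starTree, finSuccProdEquiv, eq_comm, Fin.castSucc_ne_last]), hA, hD, ih,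
      pow_succ]

theorem permPoly_starTree_succ (k : ℕ) :
    permPoly (starTree (k + 1) T' u')
      = permPoly (starTree k T' u') * permPoly T'
        + permPoly T' ^ k * permPoly (T'.induce {v | v ≠ u'}) := by
  set G := (starTree (k + 1) T' u').comap (starTreeSuccEquiv k V')
  have hA : G.comap inl = starTree k T' u' := by
    ext (_ | ⟨i, a⟩) (_ | ⟨j, b⟩) <;> simp [G, starTree, starTreeSuccEquiv, finSuccProdEquiv]
  have hD : G.comap inr = T' := by
    ext a b
    simp [G, starTree, starTreeSuccEquiv, finSuccProdEquiv, SimpleGraph.ne_and_adj_or_adj_iff]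
  have hPD : (G.comap (Sum.elim (fun _ : Unit => inl (inl ())) inr)).comap inr = T' := hD
  rw [← permPoly_comap_equiv _ (starTreeSuccEquiv k V'),
    permPoly_eq_of_cutVertex G (inl ()) (by
      simp [G, starTree, starTreeSuccEquiv, finSuccProdEquiv, eq_comm, Fin.castSucc_ne_last]),
    permPoly_eq_of_pendant _ u' (by simp [G, starTree, starTreeSuccEquiv, finSuccProdEquiv]),
    hPD, hA, hD, permPoly_induce_ne_inl, permPoly_starTree_comap_inr]
  ring

theorem permPoly_starTree (k : ℕ) :
    permPoly (starTree (k + 1) T' u')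
      = X * permPoly T' ^ (k + 1)
        + (k + 1 : ℂ[X]) * permPoly (T'.induce {v | v ≠ u'}) * permPoly T' ^ k := by
  induction k with
  | zero =>
    rw [permPoly_starTree_succ, permPoly_eq_permanent (starTree 0 T' u'),
      Matrix.permanent_eq_elem_of_card_eq_one (by simp) (inl ()), permMatrix_diag]
    ring
  | succ k ih =>
    rw [permPoly_starTree_succ, ih]
    push_cast
    ring

end starTree

section forest

variable {V : Type*} [Fintype V] [DecidableEq V] {G : SimpleGraph V}

/-- A longer orbit of `σ` through `i` would connect `σ i` to `i` without using the edge
`{σ i, i}`, which is a bridge of the forest. -/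
theorem SimpleGraph.IsAcyclic.sq_eq_one_of_forall_adj (hG : G.IsAcyclic) {σ : Equiv.Perm V}
    (hσ : ∀ i, σ i ≠ i → G.Adj (σ i) i) : σ ^ 2 = 1 := by
  refine Equiv.ext fun i => ?_
  by_contra hi
  simp only [sq, Equiv.Perm.mul_apply, Equiv.Perm.one_apply] at hi
  have hfix : σ i ≠ i := fun h => hi (by rw [h, h])
  have hbridge := SimpleGraph.isAcyclic_iff_forall_adj_isBridge.mp hG (hσ i hfix)
  rw [SimpleGraph.isBridge_iff] at hbridge
  have hreach : ∀ m, (G.deleteEdges {s(σ i, i)}).Reachable (σ i) ((σ ^ (m + 1)) i) := by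
    intro m
    induction m with
    | zero => simp
    | succ m ih =>
      have hx : (σ ^ (m + 1)) i ≠ i := fun h => hbridge (by rwa [h] at ih)
      have hσx : σ ((σ ^ (m + 1)) i) ≠ (σ ^ (m + 1)) i :=
        fun h => hfix ((σ.apply_pow_apply_eq_iff (m + 1)).mp h)
      refine ih.trans (SimpleGraph.Adj.reachable ?_)
      rw [pow_succ' σ (m + 1), Equiv.Perm.mul_apply, SimpleGraph.deleteEdges_adj]
      refine ⟨(hσ _ hσx).symm, ?_⟩
      simp only [Set.mem_singleton_iff, Sym2.eq_iff, hx, false_and, or_false]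
      rintro ⟨h₁, h₂⟩
      rw [h₁] at h₂
      exact hi h₂
  have hn := Nat.sub_add_cancel (orderOf_pos σ)
  exact hbridge (by simpa [hn, pow_orderOf_eq_one] using hreach (orderOf σ - 1))

theorem Equiv.Perm.sign_smul_pow_card_support_of_sq_eq_one {R : Type*} [CommRing R] {c : R}
    (hc : c ^ 2 = -1) {σ : Equiv.Perm V} (hσ : σ ^ 2 = 1) :
    Equiv.Perm.sign σ • c ^ σ.support.card = 1 := by
  rw [Equiv.Perm.sign_of_cycleType, ← Equiv.Perm.sum_cycleType,
    Equiv.Perm.cycleType_of_pow_prime_eq_one (p := 2) hσ, Multiset.sum_replicate,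
    Multiset.card_replicate, smul_eq_mul, mul_comm, pow_mul, hc, Units.smul_def, pow_add,
    pow_mul, neg_one_sq, one_pow, one_mul]
  push_cast
  simp [← mul_pow]

/-- Only involutions along edges contribute to either side, and for those the extra factor
`sign σ · i ^ |supp σ|` of the determinant is `1`. -/
theorem SimpleGraph.IsAcyclic.permPoly_eq_charpoly [DecidableRel G.Adj] (hG : G.IsAcyclic) :
    permPoly G = (Complex.I • G.adjMatrix ℂ).charpoly := by
  have hentry : ∀ i j, (Complex.I • G.adjMatrix ℂ).charmatrix i j
      = (if i = j then 1 else C Complex.I) * permMatrix G i j := by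
    intro i j
    by_cases hij : i = j
    · simp [hij, permMatrix]
    · by_cases h : G.Adj i j <;> simp [permMatrix, hij, h]
  rw [permPoly_eq_permanent, Matrix.charpoly, Matrix.det_apply, Matrix.permanent]
  refine Finset.sum_congr rfl fun σ _ => ?_
  simp only [hentry, Finset.prod_mul_distrib]
  by_cases hzero : ∏ i, permMatrix G (σ i) i = 0
  · simp [hzero]
  have hσ : ∀ i, σ i ≠ i → G.Adj (σ i) i := fun i hi => by
    by_contra h
    exact hzero (Finset.prod_eq_zero (Finset.mem_univ i) (permMatrix_eq_zero hi h))
  have hsupp : ∏ i, (if σ i = i then 1 else C Complex.I) = C Complex.I ^ σ.support.card := by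
    rw [Finset.prod_ite, Finset.prod_const_one, one_mul, Finset.prod_const]
    rfl
  rw [hsupp, ← smul_mul_assoc, Equiv.Perm.sign_smul_pow_card_support_of_sq_eq_one
    (by rw [← C_pow, Complex.I_sq, C_neg, C_1]) (hG.sq_eq_one_of_forall_adj hσ), one_mul]

theorem SimpleGraph.IsAcyclic.permPoly_ne_zero (hG : G.IsAcyclic) : permPoly G ≠ 0 := by
  classical
  rw [hG.permPoly_eq_charpoly]
  exact (Matrix.charpoly_monic _).ne_zero

theorem SimpleGraph.IsAcyclic.re_eq_zero_of_mem_roots_permPoly (hG : G.IsAcyclic) {z : ℂ}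
    (hz : z ∈ (permPoly G).roots) : z.re = 0 := by
  classical
  rw [hG.permPoly_eq_charpoly] at hz
  have hspec := Matrix.mem_spectrum_of_isRoot_charpoly (isRoot_of_mem_roots hz)
  rw [← Units.val_mk0 Complex.I_ne_zero, ← Units.smul_def, spectrum.unit_smul_eq_smul,
    Set.mem_smul_set] at hspec
  obtain ⟨w, hw, rfl⟩ := hspec
  have hw' : w ∈ (G.adjMatrix ℂ).charpoly.roots :=
    (mem_roots (Matrix.charpoly_monic _).ne_zero).mpr
      (Matrix.mem_spectrum_iff_isRoot_charpoly.mp hw)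
  rw [(G.isHermitian_adjMatrix ℂ).roots_charpoly_eq_eigenvalues] at hw'
  obtain ⟨j, -, rfl⟩ := Multiset.mem_map.mp hw'
  simp

end forest

theorem Polynomial.forall_mem_roots_pow_mul_iff {R : Type*} [CommRing R] [IsDomain R]
    {p q : R[X]} (P : R → Prop) (hp : p ≠ 0) (hpP : ∀ z ∈ p.roots, P z) (n : ℕ) :
    (∀ z ∈ (p ^ n * q).roots, P z) ↔ ∀ z ∈ q.roots, P z := by
  rcases eq_or_ne q 0 with rfl | hq
  · simp
  rw [roots_mul (mul_ne_zero (pow_ne_zero n hp) hq), roots_pow]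
  simp only [Multiset.mem_add]
  exact ⟨fun h z hz => h z (Or.inr hz),
    fun h z => Or.rec (fun hz => hpP z (Multiset.mem_of_mem_nsmul hz)) (h z)⟩

/-- Schwenk-type formula for the coalescence of a rooted graph `(G₁, r₁)` with
the rooted tree `T = R(T'^(k), r₂)`:
`π(G) = π(T')^(k−1) · (π(G₁)π(T') + k·π(G₁ − r₁)π(T' − u'))`.
In particular, `G` has purely imaginary per-spectrum iff the polynomial
`H = π(G₁)π(T') + k·π(G₁ − r₁)π(T' − u')` has all roots purely imaginary. -/
theorem permPoly_coalesce_starTree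

    {V₁ V' : Type*} [Fintype V₁] [DecidableEq V₁] [Fintype V'] [DecidableEq V']
    (G₁ : SimpleGraph V₁) (r₁ : V₁) (T' : SimpleGraph V') (u' : V')
    (hT' : T'.IsTree) (k : ℕ) (hk : 1 ≤ k) :
    permPoly (coalesce G₁ r₁ (starTree k T' u') (Sum.inl ())) =
        permPoly T' ^ (k - 1) *
          (permPoly G₁ * permPoly T' +
            (k : Polynomial ℂ) *
              (permPoly (G₁.induce {v | v ≠ r₁}) *
                permPoly (T'.induce {v | v ≠ u'}))) ∧
      ((∀ z ∈ (permPoly (coalesce G₁ r₁ (starTree k T' u') (Sum.inl ()))).roots,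
          z.re = 0) ↔
        (∀ z ∈ (permPoly G₁ * permPoly T' +
            (k : Polynomial ℂ) *
              (permPoly (G₁.induce {v | v ≠ r₁}) *
                permPoly (T'.induce {v | v ≠ u'}))).roots, z.re = 0)) := by
  obtain ⟨m, rfl⟩ : ∃ m, k = m + 1 := ⟨k - 1, by omega⟩
  have hformula : permPoly (coalesce G₁ r₁ (starTree (m + 1) T' u') (Sum.inl ())) =
      permPoly T' ^ m * (permPoly G₁ * permPoly T' +
        ((m + 1 : ℕ) : ℂ[X]) * (permPoly (G₁.induce {v | v ≠ r₁}) *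
          permPoly (T'.induce {v | v ≠ u'}))) := by
    rw [permPoly_coalesce, permPoly_induce_ne_inl, permPoly_starTree_comap_inr, permPoly_starTree]
    push_cast
    ring
  rw [Nat.add_sub_cancel, hformula]
  exact ⟨rfl, forall_mem_roots_pow_mul_iff _ hT'.isAcyclic.permPoly_ne_zero
    (fun _ => hT'.isAcyclic.re_eq_zero_of_mem_roots_permPoly) m⟩
end

section
/- For natural numbers l, k ≥ 0, the polynomial p(x) = x^6 + (l+k+6)x^4 + (6l+3k+12)x^2 + 12l has all roots purely imaginary if and only if the cubic q(y) = y^3 − (l+k+6)y^2 + (6l+3k+12)y − 12l has all roots real, which in turn holds if and only if either (l ≤ 3 and l+k ≥ 4) or (l ≥ 4 and k ≥ 2l−4). -/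
/-- A monic real cubic with two distinct real roots has all complex roots real. -/
lemma cubic_allRootsReal_of_two_roots (b c d r1 r2 : ℝ) (h12 : r1 ≠ r2)
    (h1 : r1^3 - b*r1^2 + c*r1 - d = 0) (h2 : r2^3 - b*r2^2 + c*r2 - d = 0) :
    ∀ z : ℂ, z^3 - (b:ℂ)*z^2 + (c:ℂ)*z - (d:ℂ) = 0 → z.im = 0 := by
  have hsub : r1 - r2 ≠ 0 := sub_ne_zero.mpr h12
  have hfac : (r1 - r2) * (r1^2 + r1*r2 + r2^2 - b*(r1+r2) + c) = 0 := by
    linear_combination h1 - h2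
  have hc : c = b*(r1+r2) - (r1^2 + r1*r2 + r2^2) := by
    rcases mul_eq_zero.mp hfac with h | h
    · exact absurd h hsub
    · linarith
  have hd : d = r1*r2*(b - r1 - r2) := by
    rw [hc] at h1; linear_combination -h1
  intro z hz
  have hc' : (c:ℂ) = (b:ℂ)*((r1:ℂ)+(r2:ℂ)) - ((r1:ℂ)^2 + (r1:ℂ)*(r2:ℂ) + (r2:ℂ)^2) := by
    exact_mod_cast congrArg (Complex.ofReal) hc
  have hd' : (d:ℂ) = (r1:ℂ)*(r2:ℂ)*((b:ℂ) - (r1:ℂ) - (r2:ℂ)) := by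
    exact_mod_cast congrArg (Complex.ofReal) hd
  have hfz : (z - (r1:ℂ)) * (z - (r2:ℂ)) * (z - ((b:ℂ) - r1 - r2)) = 0 := by
    rw [hc', hd'] at hz; linear_combination hz
  rcases mul_eq_zero.mp hfz with h | h
  · rcases mul_eq_zero.mp h with h | h
    · rw [sub_eq_zero.mp h]; simp
    · rw [sub_eq_zero.mp h]; simp
  · rw [sub_eq_zero.mp h]
    simp [Complex.sub_im]

/-- Sign pattern ≤0, ≥0, ≤0, >0 at four increasing points gives two distinct real roots. -/
lemma cubic_two_roots (b c d p1 p2 p3 p4 : ℝ) (h12 : p1 < p2) (h23 : p2 < p3) (h34 : p3 < p4)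
    (s1 : p1^3 - b*p1^2 + c*p1 - d ≤ 0) (s2 : 0 ≤ p2^3 - b*p2^2 + c*p2 - d)
    (s3 : p3^3 - b*p3^2 + c*p3 - d ≤ 0) (s4 : 0 < p4^3 - b*p4^2 + c*p4 - d) :
    ∃ r1 r2 : ℝ, r1 ≠ r2 ∧ r1^3 - b*r1^2 + c*r1 - d = 0 ∧ r2^3 - b*r2^2 + c*r2 - d = 0 := by
  have hcont : Continuous (fun y : ℝ => y^3 - b*y^2 + c*y - d) := by fun_prop
  have ivt : ∀ x y : ℝ, x ≤ y → x^3 - b*x^2 + c*x - d ≤ 0 → 0 ≤ y^3 - b*y^2 + c*y - d →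
      ∃ r, x ≤ r ∧ r ≤ y ∧ r^3 - b*r^2 + c*r - d = 0 := by
    intro x y hxy h0 h1
    obtain ⟨r, hr, hfr⟩ := intermediate_value_Icc hxy hcont.continuousOn
      (⟨h0, h1⟩ : (0:ℝ) ∈ Set.Icc _ _)
    exact ⟨r, hr.1, hr.2, hfr⟩
  have ivt' : ∀ x y : ℝ, x ≤ y → 0 ≤ x^3 - b*x^2 + c*x - d → y^3 - b*y^2 + c*y - d ≤ 0 →
      ∃ r, x ≤ r ∧ r ≤ y ∧ r^3 - b*r^2 + c*r - d = 0 := by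
    intro x y hxy h0 h1
    obtain ⟨r, hr, hfr⟩ := intermediate_value_Icc' hxy hcont.continuousOn
      (⟨h1, h0⟩ : (0:ℝ) ∈ Set.Icc _ _)
    exact ⟨r, hr.1, hr.2, hfr⟩
  rcases eq_or_lt_of_le s2 with h2 | h2
  · rcases eq_or_lt_of_le s3 with h3 | h3
    · exact ⟨p2, p3, ne_of_lt h23, h2.symm, h3⟩
    · obtain ⟨r, hr1, hr2, hfr⟩ := ivt p3 p4 h34.le h3.le s4.le
      exact ⟨p2, r, by intro he; rw [he] at h23; linarith, h2.symm, hfr⟩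
  · obtain ⟨r1, ha1, ha2, hfr1⟩ := ivt p1 p2 h12.le s1 h2.le
    obtain ⟨r2, hb1, hb2, hfr2⟩ := ivt' p2 p3 h23.le h2.le s3
    refine ⟨r1, r2, ?_, hfr1, hfr2⟩
    have hne1 : r1 ≠ p2 := by intro he; rw [he] at hfr1; linarith
    have hne2 : r2 ≠ p2 := by intro he; rw [he] at hfr2; linarith
    intro he
    rcases lt_or_eq_of_le ha2 with h | h
    · rcases lt_or_eq_of_le hb1 with h' | h'
      · rw [he] at h; linarith
      · exact hne2 h'.symm
    · exact hne1 h

/-- If all complex roots of a monic real cubic are real, its discriminant is nonnegative. -/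
lemma cubic_discrim_nonneg (b c d : ℝ)
    (h : ∀ z : ℂ, z^3 - (b:ℂ)*z^2 + (c:ℂ)*z - (d:ℂ) = 0 → z.im = 0) :
    0 ≤ 18*b*c*d - 4*b^3*d + b^2*c^2 - 4*c^3 - 27*d^2 := by
  obtain ⟨z1, hz1⟩ : ∃ z : ℂ, z^3 - (b:ℂ)*z^2 + (c:ℂ)*z - (d:ℂ) = 0 := by
    have hdeg : (0:WithBot ℕ) < ((Polynomial.C (1:ℂ)) * Polynomial.X^3
        + Polynomial.C (-b:ℂ) * Polynomial.X^2 + Polynomial.C (c:ℂ) * Polynomial.X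
        + Polynomial.C (-d:ℂ)).degree := by
      rw [Polynomial.degree_cubic (by norm_num)]; norm_num
    obtain ⟨z, hz⟩ := Complex.exists_root hdeg
    refine ⟨z, ?_⟩
    simp [Polynomial.IsRoot] at hz
    linear_combination hz
  obtain ⟨s, hs⟩ := IsAlgClosed.exists_pow_nat_eq (((b:ℂ) - z1)^2 - 4*(z1^2 - (b:ℂ)*z1 + (c:ℂ))) zero_lt_two
  have hz2 : (((b:ℂ) - z1 + s)/2)^3 - (b:ℂ)*(((b:ℂ) - z1 + s)/2)^2 + (c:ℂ)*(((b:ℂ) - z1 + s)/2) - (d:ℂ) = 0 := by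
    linear_combination ((b:ℂ)/8 - 3*z1/8 + s/8) * hs + hz1
  have hz3 : (((b:ℂ) - z1 - s)/2)^3 - (b:ℂ)*(((b:ℂ) - z1 - s)/2)^2 + (c:ℂ)*(((b:ℂ) - z1 - s)/2) - (d:ℂ) = 0 := by
    linear_combination ((b:ℂ)/8 - 3*z1/8 - s/8) * hs + hz1
  have him1 := h z1 hz1
  have him2 := h _ hz2
  have him3 := h _ hz3
  set r1 := z1.re with hr1
  set r2 := (((b:ℂ) - z1 + s)/2).re with hr2
  set r3 := (((b:ℂ) - z1 - s)/2).re with hr3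
  have e1 : z1 = (r1:ℂ) := Complex.ext rfl (by simp [him1])
  have e2 : ((b:ℂ) - z1 + s)/2 = (r2:ℂ) := Complex.ext rfl (by simpa using him2)
  have e3 : ((b:ℂ) - z1 - s)/2 = (r3:ℂ) := Complex.ext rfl (by simpa using him3)
  have v1 : (r1:ℂ) + (r2:ℂ) + (r3:ℂ) = (b:ℂ) := by
    rw [← e1, ← e2, ← e3]; ring
  have v2 : (r1:ℂ)*(r2:ℂ) + (r1:ℂ)*(r3:ℂ) + (r2:ℂ)*(r3:ℂ) = (c:ℂ) := by
    rw [← e1, ← e2, ← e3]; linear_combination (-1/4 : ℂ) * hs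
  have v3 : (r1:ℂ)*(r2:ℂ)*(r3:ℂ) = (d:ℂ) := by
    rw [← e1, ← e2, ← e3]; linear_combination (-z1/4) * hs + hz1
  have V1 : r1 + r2 + r3 = b := by exact_mod_cast v1
  have V2 : r1*r2 + r1*r3 + r2*r3 = c := by exact_mod_cast v2
  have V3 : r1*r2*r3 = d := by exact_mod_cast v3
  rw [← V1, ← V2, ← V3]
  nlinarith [sq_nonneg ((r1-r2)*(r1-r3)*(r2-r3))]

/-- For naturals `l, k`, the polynomial
`p(x) = x^6 + (l+k+6)x^4 + (6l+3k+12)x^2 + 12l` has all roots purely imaginary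
iff the cubic `q(y) = y^3 − (l+k+6)y^2 + (6l+3k+12)y − 12l` has all roots real,
which holds iff either (`l ≤ 3` and `l+k ≥ 4`) or (`l ≥ 4` and `k ≥ 2l−4`). -/
theorem K23_deg3_starlike_condition (l k : ℕ) :
    ((∀ z : ℂ, z ^ 6 + (l + k + 6 : ℂ) * z ^ 4 + (6 * l + 3 * k + 12 : ℂ) * z ^ 2
        + (12 * l : ℂ) = 0 → z.re = 0) ↔
      (∀ z : ℂ, z ^ 3 - (l + k + 6 : ℂ) * z ^ 2 + (6 * l + 3 * k + 12 : ℂ) * z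
        - (12 * l : ℂ) = 0 → z.im = 0)) ∧
    ((∀ z : ℂ, z ^ 3 - (l + k + 6 : ℂ) * z ^ 2 + (6 * l + 3 * k + 12 : ℂ) * z
        - (12 * l : ℂ) = 0 → z.im = 0) ↔
      ((l ≤ 3 ∧ 4 ≤ l + k) ∨ (4 ≤ l ∧ 2 * l ≤ k + 4))) := by
  have hl0 : (0:ℝ) ≤ (l:ℝ) := Nat.cast_nonneg l
  have hk0 : (0:ℝ) ≤ (k:ℝ) := Nat.cast_nonneg k
  constructor
  · -- Part A
    constructor
    · intro hp z hz
      obtain ⟨s, hs⟩ := IsAlgClosed.exists_pow_nat_eq (-z) zero_lt_two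
      have hroot : s^6 + (l + k + 6 : ℂ)*s^4 + (6*l + 3*k + 12 : ℂ)*s^2 + (12*l : ℂ) = 0 := by
        linear_combination (s^4 - s^2*z + z^2 + (l+k+6:ℂ)*s^2 - (l+k+6:ℂ)*z
          + (6*l+3*k+12:ℂ)) * hs - hz
      have hsre := hp s hroot
      have hz'' : z = -s^2 := by linear_combination hs
      rw [hz'', pow_two]
      simp [Complex.mul_im, hsre]
    · intro hq z hz
      have hcub : (-z^2)^3 - (l+k+6:ℂ)*(-z^2)^2 + (6*l+3*k+12:ℂ)*(-z^2) - (12*l:ℂ) = 0 := by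
        linear_combination -hz
      have him := hq _ hcub
      set u : ℝ := (-z^2).re with hudef
      have hu : (-z^2 : ℂ) = (u:ℂ) := Complex.ext rfl (by simpa using him)
      have hureq : u^3 - ((l:ℝ)+k+6)*u^2 + (6*(l:ℝ)+3*k+12)*u - 12*(l:ℝ) = 0 := by
        have h' : ((u^3 - ((l:ℝ)+k+6)*u^2 + (6*(l:ℝ)+3*k+12)*u - 12*(l:ℝ) : ℝ) : ℂ) = 0 := by
          push_cast
          rw [← hu]
          linear_combination hcub
        exact_mod_cast h'
      have hu0 : 0 ≤ u := by
        by_contra hneg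
        push_neg at hneg
        nlinarith [mul_nonneg hl0 (sq_nonneg u), mul_nonneg hk0 (sq_nonneg u), sq_nonneg u,
          mul_nonneg hl0 (neg_nonneg.mpr hneg.le), mul_nonneg hk0 (neg_nonneg.mpr hneg.le),
          mul_pos (neg_pos.mpr hneg) (neg_pos.mpr hneg)]
      have hz2 : z^2 = ((-u : ℝ) : ℂ) := by push_cast; linear_combination -hu
      have h1 : z.re*z.re - z.im*z.im = -u := by
        have := congrArg Complex.re hz2
        rwa [pow_two, Complex.mul_re, Complex.ofReal_re] at this
      have h2 : z.re*z.im + z.im*z.re = 0 := by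
        have := congrArg Complex.im hz2
        rwa [pow_two, Complex.mul_im, Complex.ofReal_im] at this
      rcases mul_eq_zero.mp (by linarith : z.re * z.im = 0) with h | h
      · exact h
      · have hle : z.re * z.re ≤ 0 := by rw [h] at h1; nlinarith
        exact mul_self_eq_zero.mp (le_antisymm hle (mul_self_nonneg z.re))
  · -- Part B
    constructor
    · intro hq
      by_contra hcond
      push_neg at hcond
      obtain ⟨hA, hB⟩ := hcond
      have hq' : ∀ z : ℂ, z^3 - ((((l:ℝ)+k+6) : ℝ):ℂ)*z^2 + (((6*(l:ℝ)+3*k+12) : ℝ):ℂ)*z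
          - (((12*(l:ℝ)) : ℝ):ℂ) = 0 → z.im = 0 := by
        intro z hz
        apply hq z
        push_cast at hz ⊢
        linear_combination hz
      have hΔ := cubic_discrim_nonneg ((l:ℝ)+k+6) (6*(l:ℝ)+3*k+12) (12*(l:ℝ)) hq'
      rcases le_or_gt l 3 with hl | hl
      · have hlk := hA hl
        have hk4 : k < 4 := by omega
        interval_cases l <;> interval_cases k <;> first | omega | norm_num at hΔ
      · have hk := hB (by omega)
        have h4 : (4:ℝ) ≤ (l:ℝ) := by exact_mod_cast hl
        have hkr : (k:ℝ) + 5 ≤ 2*(l:ℝ) := by exact_mod_cast (by omega : k + 5 ≤ 2*l)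
        have ha : (0:ℝ) ≤ (l:ℝ) - 4 := by linarith
        have hm : (0:ℝ) ≤ 2*(l:ℝ) - 5 - k := by linarith
        nlinarith [mul_nonneg hk0 hm, mul_nonneg ha hm, mul_nonneg ha hk0, sq_nonneg (k:ℝ),
          sq_nonneg ((l:ℝ)-4), sq_nonneg (2*(l:ℝ)-5-k), mul_nonneg (mul_nonneg hk0 hk0) hm,
          mul_nonneg (mul_nonneg hk0 hk0) ha, mul_nonneg (mul_nonneg ha ha) hm]
    · intro hcond z hz
      obtain ⟨r1, r2, hne, hr1, hr2⟩ : ∃ r1 r2 : ℝ, r1 ≠ r2 ∧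
          (r1^3 - ((l:ℝ)+k+6)*r1^2 + (6*(l:ℝ)+3*k+12)*r1 - 12*(l:ℝ) = 0) ∧
          (r2^3 - ((l:ℝ)+k+6)*r2^2 + (6*(l:ℝ)+3*k+12)*r2 - 12*(l:ℝ) = 0) := by
        rcases hcond with ⟨hl3, hlk⟩ | ⟨hl4, hk⟩
        · have hl3r : (l:ℝ) ≤ 3 := by exact_mod_cast hl3
          have hlkr : (4:ℝ) ≤ (l:ℝ) + k := by exact_mod_cast hlk
          apply cubic_two_roots _ _ _ 0 3 4 ((l:ℝ)+(k:ℝ)+7) (by norm_num) (by norm_num)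
            (by linarith) (by nlinarith) (by nlinarith) (by nlinarith)
            (by nlinarith [mul_nonneg hl0 hk0, sq_nonneg ((l:ℝ)+k)])
        · have hl4r : (4:ℝ) ≤ (l:ℝ) := by exact_mod_cast hl4
          have hkr : 2*(l:ℝ) ≤ (k:ℝ) + 4 := by exact_mod_cast hk
          apply cubic_two_roots _ _ _ 0 2 6 ((l:ℝ)+(k:ℝ)+7) (by norm_num) (by norm_num)
            (by linarith) (by nlinarith) (by nlinarith) (by nlinarith)
            (by nlinarith [mul_nonneg hl0 hk0, sq_nonneg ((l:ℝ)+k)])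
      have := cubic_allRootsReal_of_two_roots ((l:ℝ)+k+6) (6*(l:ℝ)+3*k+12) (12*(l:ℝ))
        r1 r2 hne hr1 hr2 z ?_
      · exact this
      · push_cast
        linear_combination hz
end

section
/- For natural numbers l, k ≥ 0, the polynomial x^6 + (l+k+6)x^4 + (6l+4k+12)x^2 + (12l+4k) has all roots purely imaginary if and only if l+k ≥ 4 and l ≤ 2. -/
/-- If `z^2` is a nonpositive real number, then `z` is purely imaginary. -/
lemma K23_aux_re_zero {z : ℂ} {r : ℝ} (h : z ^ 2 = (r : ℂ)) (hr : r ≤ 0) : z.re = 0 := by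
  have him : z.re * z.im + z.im * z.re = 0 := by
    have := congrArg Complex.im h
    simpa [sq, Complex.mul_im] using this
  have hre : z.re * z.re - z.im * z.im = r := by
    have := congrArg Complex.re h
    simpa [sq, Complex.mul_re] using this
  have h0 : z.re * z.im = 0 := by linarith
  rcases mul_eq_zero.mp h0 with h1 | h1
  · exact h1
  · have : z.re * z.re = 0 := le_antisymm (by nlinarith) (mul_self_nonneg _)
    exact mul_self_eq_zero.mp this

set_option maxHeartbeats 1000000 in
lemma K23_fwd (l k : ℕ) (A B C : ℝ)
    (hA : A = l + k + 6) (hB : B = 6 * l + 4 * k + 12) (hC : C = 12 * l + 4 * k)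
    (hroots : ∀ w : ℂ, w ^ 3 + (A : ℂ) * w ^ 2 + (B : ℂ) * w + (C : ℂ) = 0 → w.im = 0) :
    4 ≤ l + k ∧ l ≤ 2 := by
  have hl0 : (0:ℝ) ≤ l := Nat.cast_nonneg l
  have hk0 : (0:ℝ) ≤ k := Nat.cast_nonneg k
  -- a real root of the cubic, by the intermediate value theorem
  have hcont : ContinuousOn (fun x : ℝ => x ^ 3 + A * x ^ 2 + B * x + C)
      (Set.Icc (-(A+1)) 0) := by fun_prop
  have hle : -(A+1) ≤ (0:ℝ) := by rw [hA]; linarith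
  have hm : (-(A+1)) ^ 3 + A * (-(A+1)) ^ 2 + B * (-(A+1)) + C ≤ 0 := by
    rw [hA, hB, hC]
    nlinarith [mul_nonneg hl0 hk0, sq_nonneg ((l:ℝ)+(k:ℝ)), mul_nonneg (mul_nonneg hl0 hl0) hk0,
      mul_nonneg (mul_nonneg hk0 hk0) hl0, mul_nonneg (mul_nonneg hl0 hl0) hl0,
      mul_nonneg (mul_nonneg hk0 hk0) hk0]
  have hM : 0 ≤ (0:ℝ) ^ 3 + A * 0 ^ 2 + B * 0 + C := by
    have h9 : (0:ℝ) ^ 3 + A * 0 ^ 2 + B * 0 + C = C := by ring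
    rw [h9, hC]; positivity
  obtain ⟨w1, _, hw1⟩ := intermediate_value_Icc hle hcont ⟨hm, hM⟩
  have hw1 : w1 ^ 3 + A * w1 ^ 2 + B * w1 + C = 0 := hw1
  have hw1C : (w1:ℂ)^3 + (A:ℂ)*(w1:ℂ)^2 + (B:ℂ)*(w1:ℂ) + (C:ℂ) = 0 := by
    have := congrArg (Complex.ofReal) hw1
    push_cast at this
    exact this
  -- discriminant of the quadratic factor is nonnegative
  have hd : 0 ≤ (w1 + A)^2 - 4*(w1^2 + A*w1 + B) := by
    by_contra hneg
    push_neg at hneg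
    set s : ℝ := Real.sqrt (-((w1 + A)^2 - 4*(w1^2 + A*w1 + B))) with hs_def
    have hs2 : s^2 = -((w1 + A)^2 - 4*(w1^2 + A*w1 + B)) := Real.sq_sqrt (by linarith)
    have hspos : 0 < s := Real.sqrt_pos.mpr (by linarith)
    have hs2C : (s:ℂ)^2 = -(((w1:ℂ) + A)^2 - 4*((w1:ℂ)^2 + A*(w1:ℂ) + B)) := by
      have := congrArg (Complex.ofReal) hs2
      push_cast at this
      exact this
    have hw2 : ((1/2:ℂ) * (-((w1:ℂ) + A) + (s:ℂ)*Complex.I))^3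
        + (A:ℂ)*((1/2:ℂ) * (-((w1:ℂ) + A) + (s:ℂ)*Complex.I))^2
        + (B:ℂ)*((1/2:ℂ) * (-((w1:ℂ) + A) + (s:ℂ)*Complex.I)) + (C:ℂ) = 0 := by
      have hI : Complex.I^2 = -1 := Complex.I_sq
      set w2 : ℂ := (1/2:ℂ) * (-((w1:ℂ) + A) + (s:ℂ)*Complex.I) with hw2def
      linear_combination hw1C + ((w2 - (w1:ℂ))/4) * Complex.I^2 * hs2C
        + ((w2 - (w1:ℂ))/4) * (-(((w1:ℂ)+A)^2) + 4*((w1:ℂ)^2 + A*(w1:ℂ) + B)) * hI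
    have him := hroots _ hw2
    have heq : ((1/2:ℂ) * (-((w1:ℂ) + A) + (s:ℂ)*Complex.I)).im = s / 2 := by
      simp [Complex.mul_im, Complex.add_im, Complex.I_im, Complex.I_re]
      ring
    rw [heq] at him
    linarith
  -- hence the discriminant of the cubic is nonnegative
  have hkey : A^2*B^2 - 4*B^3 - 4*A^3*C + 18*A*B*C - 27*C^2
      = (3*w1^2 + 2*A*w1 + B)^2 * ((w1 + A)^2 - 4*(w1^2 + A*w1 + B)) := by
    linear_combination (27*w1^3 + 27*A*w1^2 + 27*B*w1 - 4*A^3 + 18*A*B - 27*C) * hw1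
  have hDelta : 0 ≤ A^2*B^2 - 4*B^3 - 4*A^3*C + 18*A*B*C - 27*C^2 := by
    rw [hkey]
    exact mul_nonneg (sq_nonneg _) hd
  rw [hA, hB, hC] at hDelta
  -- conclude the arithmetic conditions on l, k
  by_contra hcon
  have hcase : l + k ≤ 3 ∨ 3 ≤ l := by omega
  rcases hcase with h1 | h1
  · have hl3 : l ≤ 3 := by omega
    have hk3 : k ≤ 3 := by omega
    interval_cases l <;> interval_cases k <;> first | omega | norm_num at hDelta
  · have hl3 : (3:ℝ) ≤ l := by exact_mod_cast h1
    have hu : (0:ℝ) ≤ (l:ℝ) - 3 := by linarith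
    have hid : ((l:ℝ) + ↑k + 6)^2*(6*(l:ℝ) + 4*↑k + 12)^2 - 4*(6*(l:ℝ) + 4*↑k + 12)^3
        - 4*((l:ℝ) + ↑k + 6)^3*(12*(l:ℝ) + 4*↑k)
        + 18*((l:ℝ) + ↑k + 6)*(6*(l:ℝ) + 4*↑k + 12)*(12*(l:ℝ) + 4*↑k)
        - 27*(12*(l:ℝ) + 4*↑k)^2
        = -(108*((k:ℝ)-1)^2 + 16*(k:ℝ)^3 + 24*((l:ℝ)-3)*(k:ℝ)*(7*(k:ℝ)-3)
            + 16*((l:ℝ)-3)*(k:ℝ)^3 + 72*((l:ℝ)-3)^2 + 120*((l:ℝ)-3)^2*(k:ℝ)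
            + 44*((l:ℝ)-3)^2*(k:ℝ)^2 + 40*((l:ℝ)-3)^3*(k:ℝ) + 12*((l:ℝ)-3)^4) := by
      ring
    rw [hid] at hDelta
    have t2 : (0:ℝ) ≤ 16*(k:ℝ)^3 := by positivity
    have t4 : (0:ℝ) ≤ 16*((l:ℝ)-3)*(k:ℝ)^3 := by positivity
    have t5 : (0:ℝ) ≤ 72*((l:ℝ)-3)^2 := by positivity
    have t6 : (0:ℝ) ≤ 120*((l:ℝ)-3)^2*(k:ℝ) := by positivity
    have t7 : (0:ℝ) ≤ 44*((l:ℝ)-3)^2*(k:ℝ)^2 := by positivity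
    have t8 : (0:ℝ) ≤ 40*((l:ℝ)-3)^3*(k:ℝ) := by positivity
    have t9 : (0:ℝ) ≤ 12*((l:ℝ)-3)^4 := by positivity
    have t1 : (0:ℝ) ≤ 108*((k:ℝ)-1)^2 := by positivity
    rcases Nat.eq_zero_or_pos k with rfl | hk1
    · simp only [Nat.cast_zero] at hDelta t1 t2 t4 t6 t7 t8
      nlinarith [hDelta, t5, t9]
    · have hk1' : (1:ℝ) ≤ k := by exact_mod_cast hk1
      have t2' : (16:ℝ) ≤ 16*(k:ℝ)^3 := by nlinarith [hk1']
      have t3 : (0:ℝ) ≤ 24*((l:ℝ)-3)*(k:ℝ)*(7*(k:ℝ)-3) := by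
        have : (0:ℝ) ≤ 7*(k:ℝ)-3 := by linarith
        positivity
      linarith [hDelta, t1, t2', t3, t4, t5, t6, t7, t8, t9]

set_option maxHeartbeats 1000000 in
/-- Backward direction. -/
lemma K23_bwd (l k : ℕ) (h4 : 4 ≤ l + k) (h2 : l ≤ 2) (z : ℂ)
    (hz : z ^ 6 + (l + k + 6 : ℂ) * z ^ 4 + (6 * l + 4 * k + 12 : ℂ) * z ^ 2
        + (12 * l + 4 * k : ℂ) = 0) : z.re = 0 := by
  set A : ℝ := (l:ℝ) + (k:ℝ) + 6 with hA
  set B : ℝ := 6*(l:ℝ) + 4*(k:ℝ) + 12 with hB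
  set C : ℝ := 12*(l:ℝ) + 4*(k:ℝ) with hC
  have hl0 : (0:ℝ) ≤ l := Nat.cast_nonneg l
  have hk0 : (0:ℝ) ≤ k := Nat.cast_nonneg k
  have h4' : (4:ℝ) ≤ (l:ℝ) + (k:ℝ) := by exact_mod_cast h4
  have h2' : (l:ℝ) ≤ 2 := by exact_mod_cast h2
  have hcont1 : ContinuousOn (fun x : ℝ => x ^ 3 + A * x ^ 2 + B * x + C)
      (Set.Icc (-(A+1)) (-4)) := by fun_prop
  have hcont2 : ContinuousOn (fun x : ℝ => x ^ 3 + A * x ^ 2 + B * x + C)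
      (Set.Icc (-2) 0) := by fun_prop
  -- root a in [-(A+1), -4]
  have hle1 : -(A+1) ≤ (-4:ℝ) := by rw [hA]; linarith
  have hm1 : (-(A+1)) ^ 3 + A * (-(A+1)) ^ 2 + B * (-(A+1)) + C ≤ 0 := by
    rw [hA, hB, hC]
    nlinarith [mul_nonneg hl0 hk0, sq_nonneg ((l:ℝ)+(k:ℝ)), mul_nonneg (mul_nonneg hl0 hl0) hk0,
      mul_nonneg (mul_nonneg hk0 hk0) hl0, mul_nonneg (mul_nonneg hl0 hl0) hl0,
      mul_nonneg (mul_nonneg hk0 hk0) hk0]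
  have hM1 : 0 ≤ (-4:ℝ) ^ 3 + A * (-4) ^ 2 + B * (-4) + C := by
    rw [hA, hB, hC]; nlinarith
  obtain ⟨a, hamem, hfa⟩ := intermediate_value_Icc hle1 hcont1 ⟨hm1, hM1⟩
  have hfa : a ^ 3 + A * a ^ 2 + B * a + C = 0 := hfa
  -- root b in [-2, 0]
  have hle2 : (-2:ℝ) ≤ (0:ℝ) := by norm_num
  have hm2 : (-2:ℝ) ^ 3 + A * (-2) ^ 2 + B * (-2) + C ≤ 0 := by
    rw [hA, hB, hC]; nlinarith
  have hM2 : 0 ≤ (0:ℝ) ^ 3 + A * 0 ^ 2 + B * 0 + C := by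
    rw [hC]; positivity
  obtain ⟨b, hbmem, hfb⟩ := intermediate_value_Icc hle2 hcont2 ⟨hm2, hM2⟩
  have hfb : b ^ 3 + A * b ^ 2 + B * b + C = 0 := hfb
  -- basic facts about a, b
  have ha4 : a ≤ -4 := hamem.2
  have hb2 : -2 ≤ b := hbmem.1
  have hb0' : b ≤ 0 := hbmem.2
  have hCpos : 0 < C := by rw [hC]; nlinarith
  have hb0 : b < 0 := by
    rcases lt_or_eq_of_le hb0' with h | h
    · exact h
    · exfalso; rw [h] at hfb; simp at hfb; linarith
  have hab : a ≠ b := by intro h; rw [h] at ha4; linarith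
  -- the third root
  set c : ℝ := -A - a - b with hc
  have hfactor : (a - b) * (a^2 + a*b + b^2 + A*(a+b) + B) = 0 := by
    linear_combination hfa - hfb
  have h2' : a^2 + a*b + b^2 + A*(a+b) + B = 0 := by
    rcases mul_eq_zero.mp hfactor with h | h
    · exact absurd (sub_eq_zero.mp h) hab
    · exact h
  have he2 : a*b + a*c + b*c = B := by rw [hc]; linear_combination (-1) * h2'
  have he3 : a*b*c = -C := by rw [hc]; linear_combination (-a) * h2' + hfa
  have hc0 : c ≤ 0 := by
    by_contra hcpos
    push_neg at hcpos
    have h1 : (0:ℝ) < -a := by linarith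
    have h2'' : (0:ℝ) < -b := by linarith
    nlinarith [mul_pos (mul_pos h1 h2'') hcpos]
  -- the sextic factors
  have hsumC : (a:ℂ) + (b:ℂ) + (c:ℂ) = -((l:ℂ) + (k:ℂ) + 6) := by
    have : a + b + c = -A := by rw [hc]; ring
    rw [hA] at this
    have := congrArg (Complex.ofReal) this
    push_cast at this
    exact this
  have he2C : (a:ℂ)*(b:ℂ) + (a:ℂ)*(c:ℂ) + (b:ℂ)*(c:ℂ) = 6*(l:ℂ) + 4*(k:ℂ) + 12 := by
    have := he2
    rw [hB] at this
    have := congrArg (Complex.ofReal) this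
    push_cast at this
    exact this
  have he3C : (a:ℂ)*(b:ℂ)*(c:ℂ) = -(12*(l:ℂ) + 4*(k:ℂ)) := by
    have := he3
    rw [hC] at this
    have := congrArg (Complex.ofReal) this
    push_cast at this
    exact this
  have hprod : (z^2 - (a:ℂ)) * (z^2 - (b:ℂ)) * (z^2 - (c:ℂ)) = 0 := by
    linear_combination hz - z^4 * hsumC + z^2 * he2C - he3C
  rcases mul_eq_zero.mp hprod with h | h
  · rcases mul_eq_zero.mp h with h' | h'
    · exact K23_aux_re_zero (sub_eq_zero.mp h') (by linarith)
    · exact K23_aux_re_zero (sub_eq_zero.mp h') (le_of_lt hb0)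
  · exact K23_aux_re_zero (sub_eq_zero.mp h) hc0

/-- For naturals `l, k`, the polynomial
`x^6 + (l+k+6)x^4 + (6l+4k+12)x^2 + (12l+4k)` has all roots purely imaginary
iff `l + k ≥ 4` and `l ≤ 2`. -/
theorem K23_deg2_starlike_condition (l k : ℕ) :
    (∀ z : ℂ, z ^ 6 + (l + k + 6 : ℂ) * z ^ 4 + (6 * l + 4 * k + 12 : ℂ) * z ^ 2
        + (12 * l + 4 * k : ℂ) = 0 → z.re = 0) ↔
      (4 ≤ l + k ∧ l ≤ 2) := by
  constructor
  · intro h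
    apply K23_fwd l k ((l:ℝ) + k + 6) (6*(l:ℝ) + 4*k + 12) (12*(l:ℝ) + 4*k) rfl rfl rfl
    intro w hw
    obtain ⟨z, hz⟩ := IsAlgClosed.exists_pow_nat_eq w (n := 2) (by norm_num)
    have hp : z ^ 6 + (l + k + 6 : ℂ) * z ^ 4 + (6 * l + 4 * k + 12 : ℂ) * z ^ 2
        + (12 * l + 4 * k : ℂ) = 0 := by
      push_cast at hw
      rw [← hz] at hw
      linear_combination hw
    have hre := h z hp
    rw [← hz]
    simp [sq, Complex.mul_im, hre]
  · rintro ⟨h4, h2⟩ z hz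
    exact K23_bwd l k h4 h2 z hz
end

section
/- Every root of the polynomial x^8 + (k+l+9)x^6 + (6k+9l+36)x^4 + (12k+36l+36)x^2 + 36l is purely imaginary when (k,l) ∈ {(5,1), (6,0), (7,0)}. Explicitly: for (k,l)=(6,0) the polynomial is x^2(x^6+15x^4+72x^2+108) = x^2(x^2+3)(x^2+6)^2; for (k,l)=(7,0) it is x^2(x^6+16x^4+78x^2+120); for (k,l)=(5,1) it is x^8+15x^6+75x^4+132x^2+36. -/
/-- If `u² = d` for a nonnegative real `d`, then `u` is real. -/
lemma sq_eq_nonneg_real_im {u : ℂ} {d : ℝ} (hd : 0 ≤ d) (h : u ^ 2 = (d : ℂ)) : u.im = 0 := by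
  have h1 : u.re * u.re - u.im * u.im = d := by
    have := congrArg Complex.re h
    simpa [pow_two, Complex.mul_re] using this
  have h2 : u.re * u.im + u.im * u.re = 0 := by
    have := congrArg Complex.im h
    simpa [pow_two, Complex.mul_im] using this
  by_contra him
  have hre : u.re = 0 := by
    have h2' : u.re * u.im = 0 := by nlinarith [h2]
    rcases mul_eq_zero.mp h2' with h' | h'
    · exact h'
    · exact absurd h' him
  rw [hre] at h1
  have : 0 < u.im * u.im := mul_self_pos.mpr him
  linarith

/-- A complex root of a real quadratic with nonneg coefficients and nonneg discriminant
is real and nonpositive. -/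
lemma quad_root_real_nonpos (p q : ℝ) (hp : 0 ≤ p) (hq : 0 ≤ q)
    (hd : 0 ≤ p ^ 2 - 4 * q) (w : ℂ)
    (h : w ^ 2 + (p : ℂ) * w + (q : ℂ) = 0) : w.im = 0 ∧ w.re ≤ 0 := by
  have key : (w + ((p / 2 : ℝ) : ℂ)) ^ 2 = (((p ^ 2 - 4 * q) / 4 : ℝ) : ℂ) := by
    push_cast
    linear_combination h
  have him : (w + ((p / 2 : ℝ) : ℂ)).im = 0 := sq_eq_nonneg_real_im (by linarith) key
  have hwim : w.im = 0 := by simpa using him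
  refine ⟨hwim, ?_⟩
  have hre : w.re * w.re + p * w.re + q = 0 := by
    have := congrArg Complex.re h
    simpa [pow_two, Complex.mul_re, hwim] using this
  nlinarith [sq_nonneg w.re]

lemma re_eq_zero_of_sq (z : ℂ) (h1 : (z ^ 2).im = 0) (h2 : (z ^ 2).re ≤ 0) : z.re = 0 := by
  have e1 : z.re * z.im + z.im * z.re = 0 := by simpa [pow_two, Complex.mul_im] using h1
  have e2 : z.re * z.re - z.im * z.im ≤ 0 := by simpa [pow_two, Complex.mul_re] using h2
  by_cases him : z.im = 0
  · rw [him] at e2; nlinarith [sq_nonneg z.re]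
  · have : z.re * z.im = 0 := by linarith
    rcases mul_eq_zero.mp this with h' | h'
    · exact h'
    · exact absurd h' him

/-- Every root of
`x^8 + (k+l+9)x^6 + (6k+9l+36)x^4 + (12k+36l+36)x^2 + 36l`
is purely imaginary when `(k,l) ∈ {(5,1), (6,0), (7,0)}`. -/
theorem K33_coalescence_purely_imaginary (k l : ℕ)
    (h : (k, l) = (5, 1) ∨ (k, l) = (6, 0) ∨ (k, l) = (7, 0)) :
    ∀ z : ℂ, z ^ 8 + (k + l + 9 : ℂ) * z ^ 6 + (6 * k + 9 * l + 36 : ℂ) * z ^ 4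
        + (12 * k + 36 * l + 36 : ℂ) * z ^ 2 + (36 * l : ℂ) = 0 →
      z.re = 0 := by
  intro z hz
  have key : (z ^ 2).im = 0 ∧ (z ^ 2).re ≤ 0 := by
    rcases h with h | h | h <;> injection h with hk hl <;> subst hk <;> subst hl <;>
      push_cast at hz <;> norm_num at hz
    · -- (k,l) = (5,1)
      have hfac : (z ^ 2 + 6) * ((z ^ 2) ^ 3 + 9 * (z ^ 2) ^ 2 + 21 * (z ^ 2) + 6) = 0 := by
        linear_combination hz
      rcases mul_eq_zero.mp hfac with h1 | h1
      · have hw : z ^ 2 = -6 := by linear_combination h1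
        rw [hw]; norm_num
      · -- root of the cubic in [-4, -3] by IVT
        obtain ⟨r, hrm, hr⟩ : ∃ r ∈ Set.Icc (-4 : ℝ) (-3), r ^ 3 + 9 * r ^ 2 + 21 * r + 6 = 0 := by
          have hc : ContinuousOn (fun x : ℝ => x ^ 3 + 9 * x ^ 2 + 21 * x + 6)
              (Set.Icc (-4) (-3)) := (by continuity : Continuous _).continuousOn
          have hsub := intermediate_value_Icc' (by norm_num : (-4 : ℝ) ≤ -3) hc
          have h0 : (0 : ℝ) ∈ Set.Icc ((fun x : ℝ => x ^ 3 + 9 * x ^ 2 + 21 * x + 6) (-3))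
              ((fun x : ℝ => x ^ 3 + 9 * x ^ 2 + 21 * x + 6) (-4)) := by norm_num
          obtain ⟨r, hrm, hr⟩ := hsub h0
          exact ⟨r, hrm, hr⟩
        obtain ⟨hra, hrb⟩ := hrm
        have hrC : (r : ℂ) ^ 3 + 9 * (r : ℂ) ^ 2 + 21 * (r : ℂ) + 6 = 0 := by
          exact_mod_cast congrArg (fun t : ℝ => (t : ℂ)) hr
        have hfac2 : (z ^ 2 - (r : ℂ)) *
            ((z ^ 2) ^ 2 + ((r + 9 : ℝ) : ℂ) * (z ^ 2) + ((r ^ 2 + 9 * r + 21 : ℝ) : ℂ)) = 0 := by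
          push_cast
          linear_combination h1 - hrC
        rcases mul_eq_zero.mp hfac2 with h2 | h2
        · have hw : z ^ 2 = (r : ℂ) := by linear_combination h2
          rw [hw]
          constructor
          · simp
          · simp only [Complex.ofReal_re]; linarith
        · exact quad_root_real_nonpos (r + 9) (r ^ 2 + 9 * r + 21) (by linarith)
            (by nlinarith [sq_nonneg (2 * r + 9)]) (by nlinarith) _ h2
    · -- (k,l) = (6,0)
      have hfac : z ^ 2 * ((z ^ 2 + 3) * (z ^ 2 + 6) ^ 2) = 0 := by linear_combination hz
      rcases mul_eq_zero.mp hfac with h1 | h1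
      · rw [h1]; norm_num
      rcases mul_eq_zero.mp h1 with h2 | h2
      · have hw : z ^ 2 = -3 := by linear_combination h2
        rw [hw]; norm_num
      · have hw : z ^ 2 = -6 := by
          have := pow_eq_zero_iff (n := 2) (by norm_num) |>.mp h2
          linear_combination this
        rw [hw]; norm_num
    · -- (k,l) = (7,0)
      have hfac : z ^ 2 * ((z ^ 2 + 4) * ((z ^ 2) ^ 2 + 12 * (z ^ 2) + 30)) = 0 := by
        linear_combination hz
      rcases mul_eq_zero.mp hfac with h1 | h1
      · rw [h1]; norm_num
      rcases mul_eq_zero.mp h1 with h2 | h2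
      · have hw : z ^ 2 = -4 := by linear_combination h2
        rw [hw]; norm_num
      · refine quad_root_real_nonpos 12 30 (by norm_num) (by norm_num) (by norm_num) _ ?_
        push_cast
        linear_combination h2
  exact re_eq_zero_of_sq z key.1 key.2
end
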